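/- arXiv:1310.4126 — 5 statements merged into one kernel-verified Lean document; each statement's English description precedes it below -/
import Mathlib

section
/- Let Γ be a countable discrete sofic group with sofic approximation Σ, acting by homeomorphisms on a compact metrizable space X. Let ρ be a dynamically generating continuous pseudometric on X such that (X,ρ) has finite packing dimension, i.e. limsup_{ε→0} log S_ε(X,ρ)/log(1/ε) < ∞. Then mdim_{Σ,1}(X,ρ) = mdim_{Σ,∞}(X,ρ). -/
open Filter Topology
open scoped ENNReal

noncomputable def covNum {Z : Type*} (ρ : Z → Z → ℝ) (A : Set Z) (ε : ℝ) : ℕ :=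
  sInf {n : ℕ | ∃ D : Finset Z, ↑D ⊆ A ∧ D.card = n ∧ ∀ a ∈ A, ∃ z ∈ D, ρ a z ≤ ε}

noncomputable def elog (n : ℕ) : EReal := if n = 0 then ⊥ else ((Real.log n : ℝ) : EReal)

section CovNum

variable {Z : Type*} {ρ ρ' : Z → Z → ℝ} {A : Set Z} {ε : ℝ}

/-- The set of achievable covering cardinalities. -/
def covSet (ρ : Z → Z → ℝ) (A : Set Z) (ε : ℝ) : Set ℕ :=
  {n : ℕ | ∃ D : Finset Z, ↑D ⊆ A ∧ D.card = n ∧ ∀ a ∈ A, ∃ z ∈ D, ρ a z ≤ ε}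

lemma covNum_eq : covNum ρ A ε = sInf (covSet ρ A ε) := rfl

lemma covNum_le {D : Finset Z} (hD : ↑D ⊆ A) (hc : ∀ a ∈ A, ∃ z ∈ D, ρ a z ≤ ε) :
    covNum ρ A ε ≤ D.card :=
  Nat.sInf_le ⟨D, hD, rfl, hc⟩

lemma covNum_spec (h : (covSet ρ A ε).Nonempty) :
    ∃ D : Finset Z, ↑D ⊆ A ∧ D.card = covNum ρ A ε ∧ ∀ a ∈ A, ∃ z ∈ D, ρ a z ≤ ε :=
  Nat.sInf_mem h

lemma one_le_covNum (hA : A.Nonempty) (h : (covSet ρ A ε).Nonempty) :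
    1 ≤ covNum ρ A ε := by
  obtain ⟨D, hD, hcard, hc⟩ := covNum_spec h
  obtain ⟨a, ha⟩ := hA
  obtain ⟨z, hz, -⟩ := hc a ha
  rw [← hcard]
  exact Finset.card_pos.2 ⟨z, hz⟩

lemma covNum_empty (hA : A = ∅) : covNum ρ A ε = 0 := by
  subst hA
  refine Nat.le_zero.1 ?_
  simpa using covNum_le (D := (∅ : Finset Z)) (by simp) (by simp)

lemma covNum_mono_metric (hle : ∀ x y, ρ' x y ≤ ρ x y) (h : (covSet ρ A ε).Nonempty) :
    covNum ρ' A ε ≤ covNum ρ A ε := by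
  obtain ⟨D, hD, hcard, hc⟩ := covNum_spec h
  rw [← hcard]
  exact covNum_le hD fun a ha => by
    obtain ⟨z, hz, hle'⟩ := hc a ha
    exact ⟨z, hz, le_trans (hle a z) hle'⟩

lemma elog_mono {m n : ℕ} (h : m ≤ n) : elog m ≤ elog n := by
  unfold elog
  rcases Nat.eq_zero_or_pos m with hm | hm
  · simp [hm]
  · have hn : n ≠ 0 := by omega
    rw [if_neg (by omega), if_neg hn]
    exact_mod_cast Real.log_le_log (by exact_mod_cast hm) (by exact_mod_cast h)

lemma elog_of_pos {n : ℕ} (h : 1 ≤ n) : elog n = ((Real.log n : ℝ) : EReal) := by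
  unfold elog; rw [if_neg (by omega)]

end CovNum

/-- A continuous pseudometric on a topological space. -/
structure IsContPseudoMetric {X : Type*} [TopologicalSpace X] (ρ : X → X → ℝ) : Prop where
  refl : ∀ x, ρ x x = 0
  symm : ∀ x y, ρ x y = ρ y x
  triangle : ∀ x y z, ρ x z ≤ ρ x y + ρ y z
  continuous : Continuous fun q : X × X => ρ q.1 q.2

section PM

variable {Z : Type*} [TopologicalSpace Z] {ρ : Z → Z → ℝ}

lemma IsContPseudoMetric.nonneg (h : IsContPseudoMetric ρ) (x y : Z) : 0 ≤ ρ x y := by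
  have := h.triangle x y x
  rw [h.refl x, h.symm y x] at this
  linarith

/-- Existence of finite internal nets in any subset of a compact space. -/
lemma exists_net [CompactSpace Z] (h : IsContPseudoMetric ρ) (A : Set Z) {ε : ℝ}
    (hε : 0 < ε) : ∃ D : Finset Z, ↑D ⊆ A ∧ ∀ a ∈ A, ∃ z ∈ D, ρ a z ≤ ε := by
  classical
  rcases A.eq_empty_or_nonempty with hA | ⟨a₀, ha₀⟩
  · exact ⟨∅, by simp, by simp [hA]⟩
  · -- cover Z by balls of radius ε/2
    have hopen : ∀ z : Z, IsOpen {w | ρ z w < ε / 2} := by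
      intro z
      have : Continuous fun w => ρ z w := h.continuous.comp (Continuous.prodMk_right z)
      exact isOpen_lt this continuous_const
    have hcov : (Set.univ : Set Z) ⊆ ⋃ z : Z, {w | ρ z w < ε / 2} := by
      intro w _
      exact Set.mem_iUnion.2 ⟨w, by simp [h.refl w, half_pos hε]⟩
    obtain ⟨T, hT⟩ := IsCompact.elim_finite_subcover isCompact_univ _ hopen hcov
    set f : Z → Z := fun z =>
      if hz : (A ∩ {w | ρ z w < ε / 2}).Nonempty then hz.choose else a₀ with hf
    refine ⟨T.image f, ?_, ?_⟩
    · intro x hx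
      simp only [Finset.coe_image, Set.mem_image, Finset.mem_coe] at hx
      obtain ⟨z, -, rfl⟩ := hx
      by_cases hz : (A ∩ {w | ρ z w < ε / 2}).Nonempty
      · simp only [hf, dif_pos hz]
        exact hz.choose_spec.1
      · simp only [hf, dif_neg hz]
        exact ha₀
    · intro a ha
      have := hT (Set.mem_univ a)
      simp only [Set.mem_iUnion] at this
      obtain ⟨z, hzT, hz⟩ := this
      have hne : (A ∩ {w | ρ z w < ε / 2}).Nonempty := ⟨a, ha, hz⟩
      refine ⟨f z, Finset.mem_image_of_mem f hzT, ?_⟩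
      have h1 : ρ z a < ε / 2 := hz
      have h2 : ρ z (f z) < ε / 2 := by
        simp only [hf, dif_pos hne]
        exact hne.choose_spec.2
      calc ρ a (f z) ≤ ρ a z + ρ z (f z) := h.triangle _ _ _
        _ = ρ z a + ρ z (f z) := by rw [h.symm a z]
        _ ≤ ε := by linarith

/-- From an external `t`-net one obtains an internal `2t`-net of the same cardinality. -/
lemma covNum_le_of_external (h : IsContPseudoMetric ρ) {A : Set Z} {t : ℝ}
    (Ψ : Finset Z) (hΨ : ∀ a ∈ A, ∃ ψ ∈ Ψ, ρ a ψ ≤ t) :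
    covNum ρ A (2 * t) ≤ Ψ.card := by
  classical
  rcases A.eq_empty_or_nonempty with hA | ⟨a₀, ha₀⟩
  · rw [covNum_empty hA]; exact Nat.zero_le _
  set g : Z → Z := fun ψ =>
    if hψ : (A ∩ {a | ρ a ψ ≤ t}).Nonempty then hψ.choose else a₀ with hg
  have hgA : ∀ ψ, g ψ ∈ A := by
    intro ψ
    by_cases hψ : (A ∩ {a | ρ a ψ ≤ t}).Nonempty
    · simp only [hg, dif_pos hψ]; exact hψ.choose_spec.1
    · simp only [hg, dif_neg hψ]; exact ha₀
  have : covNum ρ A (2 * t) ≤ (Ψ.image g).card := by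
    refine covNum_le ?_ ?_
    · intro x hx
      simp only [Finset.coe_image, Set.mem_image, Finset.mem_coe] at hx
      obtain ⟨ψ, -, rfl⟩ := hx
      exact hgA ψ
    · intro a ha
      obtain ⟨ψ, hψΨ, hψ⟩ := hΨ a ha
      have hne : (A ∩ {a | ρ a ψ ≤ t}).Nonempty := ⟨a, ha, hψ⟩
      refine ⟨g ψ, Finset.mem_image_of_mem g hψΨ, ?_⟩
      have h2 : ρ (g ψ) ψ ≤ t := by
        simp only [hg, dif_pos hne]
        exact hne.choose_spec.2
      calc ρ a (g ψ) ≤ ρ a ψ + ρ ψ (g ψ) := h.triangle _ _ _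
        _ = ρ a ψ + ρ (g ψ) ψ := by rw [h.symm ψ (g ψ)]
        _ ≤ 2 * t := by linarith
  exact this.trans (Finset.card_image_le)

end PM

/-- The `ℓ^p`-product pseudometric `ρ_p` on `X^k` (normalized), with `p = ∞` giving the max. -/
noncomputable def pPM {Z : Type*} (ρ : Z → Z → ℝ) (p : ℝ≥0∞) {k : ℕ}
    (x y : Fin k → Z) : ℝ :=
  if p = ⊤ then ⨆ j, ρ (x j) (y j)
  else ((k : ℝ)⁻¹ * ∑ j, ρ (x j) (y j) ^ p.toReal) ^ (p.toReal)⁻¹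

section PPM

variable {Z : Type*} {ρ : Z → Z → ℝ} {k : ℕ}

lemma pPM_one_apply (x y : Fin k → Z) :
    pPM ρ 1 x y = (k : ℝ)⁻¹ * ∑ j, ρ (x j) (y j) := by
  unfold pPM
  rw [if_neg (by simp)]
  simp [ENNReal.toReal_one, Real.rpow_one]

lemma pPM_top_apply (x y : Fin k → Z) :
    pPM ρ ⊤ x y = ⨆ j, ρ (x j) (y j) := if_pos rfl

variable [TopologicalSpace Z]

lemma pPM_top_le (h : IsContPseudoMetric ρ) {x y : Fin k → Z} {t : ℝ} (ht : 0 ≤ t)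
    (hj : ∀ j, ρ (x j) (y j) ≤ t) : pPM ρ ⊤ x y ≤ t := by
  rw [pPM_top_apply]
  exact Real.iSup_le hj ht

lemma le_pPM_top (h : IsContPseudoMetric ρ) (x y : Fin k → Z) (j : Fin k) :
    ρ (x j) (y j) ≤ pPM ρ ⊤ x y := by
  rw [pPM_top_apply]
  exact le_ciSup (f := fun j => ρ (x j) (y j))
    (Set.Finite.bddAbove (Set.finite_range _)) j

lemma pPM_one_le_top (h : IsContPseudoMetric ρ) (x y : Fin k → Z) :
    pPM ρ 1 x y ≤ pPM ρ ⊤ x y := by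
  rcases Nat.eq_zero_or_pos k with hk | hk
  · subst hk
    rw [pPM_one_apply, pPM_top_apply]
    simp
  · rw [pPM_one_apply]
    have hsum : ∑ j, ρ (x j) (y j) ≤ (k : ℝ) * pPM ρ ⊤ x y := by
      calc ∑ j, ρ (x j) (y j) ≤ ∑ _j : Fin k, pPM ρ ⊤ x y :=
            Finset.sum_le_sum fun j _ => le_pPM_top h x y j
        _ = (k : ℝ) * pPM ρ ⊤ x y := by simp [mul_comm]
    have hk' : (0 : ℝ) < k := by exact_mod_cast hk
    calc (k : ℝ)⁻¹ * ∑ j, ρ (x j) (y j) ≤ (k : ℝ)⁻¹ * ((k : ℝ) * pPM ρ ⊤ x y) := by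
          exact mul_le_mul_of_nonneg_left hsum (by positivity)
      _ = pPM ρ ⊤ x y := by field_simp

lemma isCPM_pPM_one (h : IsContPseudoMetric ρ) :
    IsContPseudoMetric (fun x y : Fin k → Z => pPM ρ 1 x y) := by
  constructor
  · intro x; simp [pPM_one_apply, h.refl]
  · intro x y; simp only [pPM_one_apply]
    congr 1
    exact Finset.sum_congr rfl fun j _ => h.symm _ _
  · intro x y z
    simp only [pPM_one_apply]
    rw [← mul_add, ← Finset.sum_add_distrib]
    refine mul_le_mul_of_nonneg_left (Finset.sum_le_sum fun j _ => h.triangle _ _ _)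
      (by positivity)
  · simp only [pPM_one_apply]
    refine Continuous.mul continuous_const ?_
    refine continuous_finset_sum _ fun j _ => ?_
    have c1 : Continuous fun q : (Fin k → Z) × (Fin k → Z) => (q.1 j, q.2 j) :=
      ((continuous_apply j).comp continuous_fst).prodMk
        ((continuous_apply j).comp continuous_snd)
    exact h.continuous.comp c1

lemma isCPM_pPM_top (h : IsContPseudoMetric ρ) :
    IsContPseudoMetric (fun x y : Fin k → Z => pPM ρ ⊤ x y) := by
  have hnn : ∀ (x y : Fin k → Z), 0 ≤ pPM ρ ⊤ x y := by
    intro x y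
    rw [pPM_top_apply]
    exact Real.iSup_nonneg fun j => h.nonneg _ _
  constructor
  · intro x
    refine le_antisymm (pPM_top_le h le_rfl fun j => by rw [h.refl]) (hnn x x)
  · intro x y
    simp only [pPM_top_apply]
    exact congrArg iSup (funext fun j => h.symm _ _)
  · intro x y z
    refine pPM_top_le h (add_nonneg (hnn _ _) (hnn _ _)) fun j => ?_
    calc ρ (x j) (z j) ≤ ρ (x j) (y j) + ρ (y j) (z j) := h.triangle _ _ _
      _ ≤ pPM ρ ⊤ x y + pPM ρ ⊤ y z := add_le_add (le_pPM_top h x y j) (le_pPM_top h y z j)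
  · rcases Nat.eq_zero_or_pos k with hk | hk
    · subst hk
      have : (fun q : (Fin 0 → Z) × (Fin 0 → Z) => pPM ρ ⊤ q.1 q.2) = fun _ => 0 := by
        funext q
        rw [pPM_top_apply]
        exact Real.iSup_of_isEmpty _
      rw [this]; exact continuous_const
    · haveI : Nonempty (Fin k) := ⟨⟨0, hk⟩⟩
      have hne : (Finset.univ : Finset (Fin k)).Nonempty := ⟨⟨0, hk⟩, Finset.mem_univ _⟩
      have heq : (fun q : (Fin k → Z) × (Fin k → Z) => pPM ρ ⊤ q.1 q.2) =
          fun q => Finset.univ.sup' hne (fun j => ρ (q.1 j) (q.2 j)) := by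
        funext q
        rw [pPM_top_apply, ← Finset.sup'_univ_eq_ciSup]
      rw [heq]
      refine Continuous.finset_sup'_apply hne fun j _ => ?_
      have c1 : Continuous fun q : (Fin k → Z) × (Fin k → Z) => (q.1 j, q.2 j) :=
        ((continuous_apply j).comp continuous_fst).prodMk
          ((continuous_apply j).comp continuous_snd)
      exact h.continuous.comp c1

end PPM

section Counting

open Finset

variable {X : Type*}

/-- The finset of "sparse modification patterns": functions `Fin k → Option X` with values
in `E` and at most `b` non-`none` coordinates. -/
noncomputable def sparse (k b : ℕ) (E : Finset X) : Finset (Fin k → Option X) := by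
  classical
  exact (Fintype.piFinset (fun _ : Fin k => insert none (E.image some))).filter
    (fun g => (Finset.univ.filter fun j => (g j).isSome).card ≤ b)

lemma card_sparse_le (k b : ℕ) (E : Finset X) {lam : ℝ} (hlam : 0 < lam) (hlam1 : lam ≤ 1) :
    ((sparse k b E).card : ℝ) * lam ^ b ≤ (1 + lam * E.card) ^ k := by
  classical
  have hterm : ∀ g ∈ sparse k b E,
      lam ^ b ≤ ∏ j : Fin k, (if (g j).isSome then lam else 1) := by
    intro g hg
    have hcard : (Finset.univ.filter fun j => (g j).isSome).card ≤ b := by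
      simpa [sparse] using (Finset.mem_filter.1 hg).2
    have : ∏ j : Fin k, (if (g j).isSome then lam else 1)
        = lam ^ (Finset.univ.filter fun j => (g j).isSome).card := by
      rw [Finset.prod_ite, Finset.prod_const, Finset.prod_const, one_pow, mul_one]
    rw [this]
    exact pow_le_pow_of_le_one (le_of_lt hlam) hlam1 hcard
  have h1 : ((sparse k b E).card : ℝ) * lam ^ b
      = ∑ _g ∈ sparse k b E, lam ^ b := by
    rw [Finset.sum_const, nsmul_eq_mul]
  rw [h1]
  have h2 : ∑ _g ∈ sparse k b E, lam ^ b
      ≤ ∑ g ∈ sparse k b E, ∏ j : Fin k, (if (g j).isSome then lam else 1) :=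
    Finset.sum_le_sum hterm
  have h3 : ∑ g ∈ sparse k b E, ∏ j : Fin k, (if (g j).isSome then lam else 1)
      ≤ ∑ g ∈ Fintype.piFinset (fun _ : Fin k => insert none (E.image some)),
          ∏ j : Fin k, (if (g j).isSome then lam else 1) := by
    refine Finset.sum_le_sum_of_subset_of_nonneg (Finset.filter_subset _ _) ?_
    intro g _ _
    refine Finset.prod_nonneg fun j _ => ?_
    split <;> [exact le_of_lt hlam; norm_num]
  have h4 : ∑ g ∈ Fintype.piFinset (fun _ : Fin k => insert none (E.image some)),
      ∏ j : Fin k, (if (g j).isSome then lam else 1) = (1 + lam * E.card) ^ k := by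
    rw [← Finset.prod_univ_sum (fun _ : Fin k => insert none (E.image some))
      (fun _ o => if o.isSome then lam else 1)]
    have hinner : ∀ j : Fin k, ∑ x ∈ insert none (E.image some),
        (if x.isSome then lam else 1) = 1 + lam * E.card := by
      intro j
      have hnone : (none : Option X) ∉ E.image some := by simp
      rw [Finset.sum_insert hnone]
      have : ∑ x ∈ E.image some, (if x.isSome then lam else 1)
          = ∑ x ∈ E.image some, lam := by
        refine Finset.sum_congr rfl fun x hx => ?_
        obtain ⟨e, -, rfl⟩ := Finset.mem_image.1 hx
        simp
      rw [this, Finset.sum_const, nsmul_eq_mul,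
        Finset.card_image_of_injective _ (Option.some_injective X)]
      simp [mul_comm]
    calc ∏ j : Fin k, ∑ x ∈ insert none (E.image some), (if x.isSome then lam else 1)
        = ∏ _j : Fin k, (1 + lam * E.card) := Finset.prod_congr rfl fun j _ => hinner j
      _ = (1 + lam * E.card) ^ k := by rw [Finset.prod_const]; simp
  linarith

end Counting

section KeyCover

variable {X : Type*} [TopologicalSpace X] [CompactSpace X] {ρ : X → X → ℝ}

lemma key_cover (h : IsContPseudoMetric ρ) {k : ℕ} (hk : 0 < k)
    (A : Set (Fin k → X)) {η t lam : ℝ} (hη : 0 < η) (ht : 0 < t)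
    (hlam : 0 < lam) (hlam1 : lam ≤ 1)
    (E : Finset X) (hE : ∀ x : X, ∃ e ∈ E, ρ x e ≤ t)
    (D : Finset (Fin k → X)) (hD : ↑D ⊆ A) (hDc : ∀ a ∈ A, ∃ d ∈ D, pPM ρ 1 a d ≤ η) :
    (covNum (fun x y => pPM ρ ⊤ x y) A (2 * t) : ℝ)
      ≤ D.card * ((1 + lam * E.card) ^ k / lam ^ (⌊(k * η) / t⌋₊)) := by
  classical
  set b : ℕ := ⌊(k * η) / t⌋₊ with hb
  set Ψ : Finset (Fin k → X) :=
    (D ×ˢ sparse k b E).image (fun p => fun j => (p.2 j).getD (p.1 j)) with hΨ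
  have hext : ∀ a ∈ A, ∃ ψ ∈ Ψ, pPM ρ ⊤ a ψ ≤ t := by
    intro a ha
    obtain ⟨d, hdD, hd⟩ := hDc a ha
    set J : Finset (Fin k) := Finset.univ.filter (fun j => t < ρ (a j) (d j)) with hJ
    -- the bad set is small
    have hsum : ∑ j, ρ (a j) (d j) ≤ (k : ℝ) * η := by
      have := pPM_one_apply (ρ := ρ) a d
      have hk' : (0 : ℝ) < k := by exact_mod_cast hk
      rw [this] at hd
      calc ∑ j, ρ (a j) (d j) = (k : ℝ) * ((k : ℝ)⁻¹ * ∑ j, ρ (a j) (d j)) := by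
            field_simp
        _ ≤ (k : ℝ) * η := mul_le_mul_of_nonneg_left hd (le_of_lt hk')
    have hJcard : (J.card : ℝ) * t ≤ ∑ j, ρ (a j) (d j) := by
      calc (J.card : ℝ) * t = ∑ _j ∈ J, t := by rw [Finset.sum_const, nsmul_eq_mul]
        _ ≤ ∑ j ∈ J, ρ (a j) (d j) := by
            refine Finset.sum_le_sum fun j hj => ?_
            have := (Finset.mem_filter.1 hj).2
            exact le_of_lt this
        _ ≤ ∑ j, ρ (a j) (d j) := by
            refine Finset.sum_le_sum_of_subset_of_nonneg (Finset.subset_univ J) ?_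
            exact fun j _ _ => h.nonneg _ _
    have hJb : J.card ≤ b := by
      rw [hb]
      refine Nat.le_floor ?_
      rw [le_div_iff₀ ht]
      exact hJcard.trans hsum
    -- the modification pattern
    have hEc : ∀ j : Fin k, ∃ e, e ∈ E ∧ ρ (a j) e ≤ t := fun j => by
      obtain ⟨e, he, het⟩ := hE (a j); exact ⟨e, he, het⟩
    choose e heE het using hEc
    set g : Fin k → Option X := fun j => if j ∈ J then some (e j) else none with hg
    have hgmem : g ∈ sparse k b E := by
      rw [sparse, Finset.mem_filter]
      constructor
      · refine Fintype.mem_piFinset.2 fun j => ?_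
        by_cases hj : j ∈ J
        · simp only [hg, if_pos hj]
          exact Finset.mem_insert_of_mem (Finset.mem_image_of_mem some (heE j))
        · simp only [hg, if_neg hj]
          exact Finset.mem_insert_self _ _
      · have heqJ : (Finset.univ.filter fun j => (g j).isSome) = J := by
          ext j
          simp only [Finset.mem_filter, Finset.mem_univ, true_and]
          by_cases hj : j ∈ J <;> simp [hg, hj]
        rw [heqJ]
        exact hJb
    set ψ : Fin k → X := fun j => (g j).getD (d j) with hψ
    have hψΨ : ψ ∈ Ψ := by
      rw [hΨ]
      have hpair : (d, g) ∈ D ×ˢ sparse k b E := Finset.mem_product.2 ⟨hdD, hgmem⟩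
      exact Finset.mem_image_of_mem
        (fun p : (Fin k → X) × (Fin k → Option X) => fun j => (p.2 j).getD (p.1 j)) hpair
    refine ⟨ψ, hψΨ, ?_⟩
    refine pPM_top_le h (le_of_lt ht) fun j => ?_
    by_cases hj : j ∈ J
    · simp only [hψ, hg, if_pos hj, Option.getD_some]
      exact het j
    · simp only [hψ, hg, if_neg hj, Option.getD_none]
      have := Finset.mem_filter.not.1 hj
      push_neg at this
      exact this (Finset.mem_univ j)
  have hcov : covNum (fun x y => pPM ρ ⊤ x y) A (2 * t) ≤ Ψ.card :=
    covNum_le_of_external (isCPM_pPM_top h) Ψ hext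
  have hΨcard : Ψ.card ≤ D.card * (sparse k b E).card := by
    calc Ψ.card ≤ (D ×ˢ sparse k b E).card := Finset.card_image_le
      _ = D.card * (sparse k b E).card := Finset.card_product _ _
  have hsp : ((sparse k b E).card : ℝ) ≤ (1 + lam * E.card) ^ k / lam ^ b := by
    rw [le_div_iff₀ (pow_pos hlam b)]
    exact card_sparse_le k b E hlam hlam1
  calc (covNum (fun x y => pPM ρ ⊤ x y) A (2 * t) : ℝ) ≤ (Ψ.card : ℝ) := by
        exact_mod_cast hcov
    _ ≤ (D.card : ℝ) * ((sparse k b E).card : ℝ) := by exact_mod_cast hΨcard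
    _ ≤ D.card * ((1 + lam * E.card) ^ k / lam ^ b) :=
        mul_le_mul_of_nonneg_left hsp (Nat.cast_nonneg _)

end KeyCover

/-- A sofic approximation of a group `Γ`. -/
structure SoficApprox (Γ : Type*) [Group Γ] where
  d : ℕ → ℕ
  σ : ∀ i, Γ → Equiv.Perm (Fin (d i))
  tendsto_d : Filter.Tendsto d Filter.atTop Filter.atTop
  mul_approx : ∀ g h : Γ, Filter.Tendsto
    (fun i => (((Finset.univ.filter fun k : Fin (d i) =>
        σ i g (σ i h k) = σ i (g * h) k).card : ℝ) / (d i : ℝ)))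
    Filter.atTop (nhds 1)
  sep_approx : ∀ g h : Γ, g ≠ h → Filter.Tendsto
    (fun i => (((Finset.univ.filter fun k : Fin (d i) =>
        σ i g k ≠ σ i h k).card : ℝ) / (d i : ℝ)))
    Filter.atTop (nhds 1)

/-- A dynamically generating continuous pseudometric for the action of `Γ` on `X`. -/
def IsDynGen (Γ : Type*) {X : Type*} [Group Γ] [MulAction Γ X] [TopologicalSpace X]
    (ρ : X → X → ℝ) : Prop :=
  IsContPseudoMetric ρ ∧ ∀ x y : X, x ≠ y → ∃ g : Γ, 0 < ρ (g • x) (g • y)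

/-- The space `Map(ρ, F, δ, σ)` of `(F,δ)`-almost equivariant microstates. -/
def MapSp {Γ X : Type*} [Group Γ] [MulAction Γ X] (ρ : X → X → ℝ) (F : Finset Γ) (δ : ℝ)
    {d : ℕ} (σ : Γ → Equiv.Perm (Fin d)) : Set (Fin d → X) :=
  {φ | ∀ g ∈ F, pPM ρ 2 (fun j => φ (σ g j)) (fun j => g • φ j) < δ}

/-- `mdim_{Σ,p}(X, ρ)`, the `p`-metric mean dimension with respect to the pseudometric `ρ`. -/
noncomputable def mdimP {Γ X : Type*} [Group Γ] [MulAction Γ X]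
    (S : SoficApprox Γ) (ρ : X → X → ℝ) (p : ℝ≥0∞) : EReal :=
  Filter.liminf (fun ε : ℝ =>
    ⨅ (F : Finset Γ) (δ : ℝ) (_ : 0 < δ),
      Filter.limsup (fun i =>
        elog (covNum (fun x y => pPM ρ p x y) (MapSp ρ F δ (S.σ i)) ε)
          * ((((S.d i : ℝ) * Real.log ε⁻¹)⁻¹ : ℝ) : EReal))
        Filter.atTop)
    (𝓝[>] (0 : ℝ))

section MDim

variable {Γ X : Type*} [Group Γ] [MulAction Γ X]

/-- One term of the sofic mean-dimension `limsup`. -/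
noncomputable def mterm (S : SoficApprox Γ) (ρ : X → X → ℝ) (p : ℝ≥0∞)
    (F : Finset Γ) (δ ε : ℝ) (i : ℕ) : EReal :=
  elog (covNum (fun x y => pPM ρ p x y) (MapSp ρ F δ (S.σ i)) ε)
    * ((((S.d i : ℝ) * Real.log ε⁻¹)⁻¹ : ℝ) : EReal)

/-- The scale-`ε` quantity whose `liminf` is `mdimP`. -/
noncomputable def mF (S : SoficApprox Γ) (ρ : X → X → ℝ) (p : ℝ≥0∞) (ε : ℝ) : EReal :=
  ⨅ (F : Finset Γ) (δ : ℝ) (_ : 0 < δ),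
    Filter.limsup (mterm S ρ p F δ ε) Filter.atTop

lemma mdimP_eq (S : SoficApprox Γ) (ρ : X → X → ℝ) (p : ℝ≥0∞) :
    mdimP S ρ p = Filter.liminf (mF S ρ p) (𝓝[>] (0 : ℝ)) := rfl

end MDim

section Easy

variable {Γ X : Type*} [Group Γ] [MulAction Γ X] [TopologicalSpace X] [CompactSpace X]

lemma mterm_one_le_top (S : SoficApprox Γ) {ρ : X → X → ℝ} (h : IsContPseudoMetric ρ)
    (F : Finset Γ) (δ : ℝ) {ε : ℝ} (hε : 0 < ε) (hε1 : ε < 1) (i : ℕ) :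
    mterm S ρ 1 F δ ε i ≤ mterm S ρ ⊤ F δ ε i := by
  set A : Set (Fin (S.d i) → X) := MapSp ρ F δ (S.σ i) with hA
  rcases A.eq_empty_or_nonempty with hAe | hAne
  · unfold mterm
    rw [covNum_empty (ρ := fun x y => pPM ρ 1 x y) hAe,
      covNum_empty (ρ := fun x y => pPM ρ ⊤ x y) hAe]
  · have hcs : (covSet (fun x y : Fin (S.d i) → X => pPM ρ ⊤ x y) A ε).Nonempty := by
      obtain ⟨D, hD, hc⟩ := exists_net (isCPM_pPM_top h) A hε
      exact ⟨D.card, D, hD, rfl, hc⟩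
    have hmono : covNum (fun x y : Fin (S.d i) → X => pPM ρ 1 x y) A ε
        ≤ covNum (fun x y : Fin (S.d i) → X => pPM ρ ⊤ x y) A ε :=
      covNum_mono_metric (fun x y => pPM_one_le_top h x y) hcs
    have h1 : 1 ≤ covNum (fun x y : Fin (S.d i) → X => pPM ρ 1 x y) A ε := by
      have hcs1 : (covSet (fun x y : Fin (S.d i) → X => pPM ρ 1 x y) A ε).Nonempty := by
        obtain ⟨D, hD, hc⟩ := exists_net (isCPM_pPM_one h) A hε
        exact ⟨D.card, D, hD, rfl, hc⟩
      exact one_le_covNum hAne hcs1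
    have ht1 : 1 ≤ covNum (fun x y : Fin (S.d i) → X => pPM ρ ⊤ x y) A ε := le_trans h1 hmono
    unfold mterm
    rw [elog_of_pos h1, elog_of_pos ht1, ← EReal.coe_mul, ← EReal.coe_mul, EReal.coe_le_coe_iff]
    have hc : (0:ℝ) ≤ ((S.d i : ℝ) * Real.log ε⁻¹)⁻¹ := by
      have : (0:ℝ) ≤ Real.log ε⁻¹ := Real.log_nonneg (by
        rw [le_inv_comm₀] <;> [skip; norm_num; exact hε] <;> linarith)
      positivity
    refine mul_le_mul_of_nonneg_right ?_ hc
    exact Real.log_le_log (by exact_mod_cast h1) (by exact_mod_cast hmono)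

lemma mdimP_one_le_top (S : SoficApprox Γ) {ρ : X → X → ℝ} (h : IsContPseudoMetric ρ) :
    mdimP S ρ 1 ≤ mdimP S ρ ⊤ := by
  rw [mdimP_eq, mdimP_eq]
  refine Filter.liminf_le_liminf ?_
  filter_upwards [Ioo_mem_nhdsGT_of_mem (Set.mem_Ico.2 ⟨le_refl (0:ℝ), zero_lt_one⟩)]
    with ε hε
  obtain ⟨hε0, hε1⟩ := hε
  refine iInf_mono fun F => iInf_mono fun δ => iInf_mono fun hδ => ?_
  refine Filter.limsup_le_limsup (Filter.Eventually.of_forall fun i => ?_)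
  exact mterm_one_le_top S h F δ hε0 hε1 i

end Easy

section Hard

variable {Γ X : Type*} [Group Γ] [MulAction Γ X] [TopologicalSpace X] [CompactSpace X]

lemma tendsto_rpow_zero' {b : ℝ} (hb : 0 < b) :
    Filter.Tendsto (fun ε : ℝ => ε ^ b) (𝓝[>] (0:ℝ)) (𝓝[>] (0:ℝ)) := by
  rw [tendsto_nhdsWithin_iff]
  constructor
  · have h1 : Filter.Tendsto (fun ε : ℝ => Real.exp (Real.log ε * b)) (𝓝[>] (0:ℝ)) (𝓝 0) :=
      Real.tendsto_exp_atBot.comp (Real.tendsto_log_nhdsGT_zero.atBot_mul_const hb)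
    refine Filter.Tendsto.congr' ?_ h1
    filter_upwards [self_mem_nhdsWithin] with ε (hε : (0:ℝ) < ε)
    rw [Real.rpow_def_of_pos hε]
  · filter_upwards [self_mem_nhdsWithin] with ε (hε : (0:ℝ) < ε)
    exact Real.rpow_pos_of_pos hε b

lemma mF_top_le_bot_of_lt (S : SoficApprox Γ) {ρ : X → X → ℝ} (h : IsContPseudoMetric ρ)
    {ε : ℝ} (hε : 0 < ε) (hε1 : ε < 1) (hlt : mF S ρ 1 ε < 0) :
    mF S ρ ⊤ ε ≤ ⊥ := by
  obtain ⟨F, hF⟩ := iInf_lt_iff.1 hlt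
  obtain ⟨δ, hδ'⟩ := iInf_lt_iff.1 hF
  obtain ⟨hδ, hlim⟩ := iInf_lt_iff.1 hδ'
  have hu : 0 < Real.log ε⁻¹ := Real.log_pos (one_lt_inv_iff₀.2 ⟨hε, hε1⟩)
  have hev : ∀ᶠ i in Filter.atTop, mterm S ρ ⊤ F δ ε i = (⊥ : EReal) := by
    filter_upwards [Filter.eventually_lt_of_limsup_lt hlim,
      S.tendsto_d.eventually_ge_atTop 1] with i h1i hki
    set A : Set (Fin (S.d i) → X) := MapSp ρ F δ (S.σ i) with hA
    have hAe : A = ∅ := by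
      by_contra hne
      rw [← Ne, ← Set.nonempty_iff_ne_empty] at hne
      have hcs1 : (covSet (fun x y : Fin (S.d i) → X => pPM ρ 1 x y) A ε).Nonempty := by
        obtain ⟨D, hD, hc⟩ := exists_net (isCPM_pPM_one h) A hε
        exact ⟨D.card, D, hD, rfl, hc⟩
      have hN1 : 1 ≤ covNum (fun x y : Fin (S.d i) → X => pPM ρ 1 x y) A ε :=
        one_le_covNum hne hcs1
      have hpos : (0:EReal) ≤ mterm S ρ 1 F δ ε i := by
        unfold mterm
        rw [elog_of_pos hN1, ← EReal.coe_mul]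
        have : (0:ℝ) ≤ Real.log (covNum (fun x y : Fin (S.d i) → X => pPM ρ 1 x y) A ε)
            * (((S.d i : ℝ) * Real.log ε⁻¹)⁻¹) := by
          have h1 : (0:ℝ) ≤ Real.log (covNum (fun x y : Fin (S.d i) → X => pPM ρ 1 x y) A ε) :=
            Real.log_natCast_nonneg _
          positivity
        exact_mod_cast this
      exact absurd (lt_of_le_of_lt hpos h1i) (by simp)
    unfold mterm
    rw [covNum_empty (ρ := fun x y : Fin (S.d i) → X => pPM ρ ⊤ x y) hAe]
    have hc : (0:ℝ) < ((S.d i : ℝ) * Real.log ε⁻¹)⁻¹ := by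
      have hk : (0:ℝ) < (S.d i : ℝ) := by exact_mod_cast hki
      positivity
    show elog 0 * _ = ⊥
    rw [show elog 0 = ⊥ from if_pos rfl]
    exact EReal.bot_mul_coe_of_pos hc
  have : Filter.limsup (mterm S ρ ⊤ F δ ε) Filter.atTop ≤ ⊥ :=
    Filter.limsup_le_of_le (by isBoundedDefault) (hev.mono fun i hi => le_of_eq hi)
  refine le_trans ?_ this
  exact iInf_le_of_le F (iInf_le_of_le δ (iInf_le_of_le hδ le_rfl))

end Hard

section Hard2

variable {Γ X : Type*} [Group Γ] [MulAction Γ X] [TopologicalSpace X] [CompactSpace X]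

lemma mF_top_le_bot_of_isEmpty (S : SoficApprox Γ) (ρ : X → X → ℝ) (hX : IsEmpty X)
    {ε : ℝ} (hε : 0 < ε) (hε1 : ε < 1) : mF S ρ ⊤ ε ≤ ⊥ := by
  have hu : 0 < Real.log ε⁻¹ := Real.log_pos (one_lt_inv_iff₀.2 ⟨hε, hε1⟩)
  have hev : ∀ᶠ i in Filter.atTop, mterm S ρ ⊤ (∅ : Finset Γ) 1 ε i = (⊥ : EReal) := by
    filter_upwards [S.tendsto_d.eventually_ge_atTop 1] with i hki
    haveI : IsEmpty (Fin (S.d i) → X) :=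
      ⟨fun f => IsEmpty.false (f ⟨0, by omega⟩)⟩
    have hAe : MapSp ρ (∅ : Finset Γ) 1 (S.σ i) = ∅ := Set.eq_empty_of_isEmpty _
    unfold mterm
    rw [covNum_empty (ρ := fun x y : Fin (S.d i) → X => pPM ρ ⊤ x y) hAe]
    have hc : (0:ℝ) < ((S.d i : ℝ) * Real.log ε⁻¹)⁻¹ := by
      have hk : (0:ℝ) < (S.d i : ℝ) := by exact_mod_cast hki
      positivity
    show elog 0 * _ = ⊥
    rw [show elog 0 = ⊥ from if_pos rfl]
    exact EReal.bot_mul_coe_of_pos hc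
  have : Filter.limsup (mterm S ρ ⊤ (∅ : Finset Γ) 1 ε) Filter.atTop ≤ ⊥ :=
    Filter.limsup_le_of_le (by isBoundedDefault) (hev.mono fun i hi => le_of_eq hi)
  refine le_trans ?_ this
  exact iInf_le_of_le ∅ (iInf_le_of_le 1 (iInf_le_of_le one_pos le_rfl))

end Hard2

section Hard3

variable {X : Type*} [TopologicalSpace X] [CompactSpace X]

/-- The core real-number estimate for a single microstate space. -/
lemma per_index {ρ : X → X → ℝ} (h : IsContPseudoMetric ρ) [Nonempty X]
    {k : ℕ} (hk : 0 < k) (A : Set (Fin k → X)) (hAne : A.Nonempty)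
    {ε β C a Lr r : ℝ}
    (hε0 : 0 < ε) (hε1 : ε < 1)
    (hβ0 : 0 < β) (hβ1 : β < 1)
    (hC1 : 1 ≤ C) (ha : 0 < a)
    (hc1 : Real.log (covNum ρ Set.univ (ε ^ β)) ≤ C * Real.log (ε ^ β)⁻¹)
    (hc2 : 2 * ε ^ β < 1)
    (hc3 : a * (Real.log ε⁻¹ / Real.log (2 * ε ^ β)⁻¹) ≤ a + r / 2)
    (hc4 : ε ^ (1 - β) * (1 + (C + 1) * Real.log ε⁻¹) / Real.log (2 * ε ^ β)⁻¹ ≤ r / 4)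
    (haLr : a + 3 * r / 4 ≤ Lr + r)
    (h1 : Real.log (covNum (fun x y : Fin k → X => pPM ρ 1 x y) A ε)
        * (((k:ℝ) * Real.log ε⁻¹)⁻¹) < a) :
    Real.log (covNum (fun x y : Fin k → X => pPM ρ ⊤ x y) A (2 * ε ^ β))
        * (((k:ℝ) * Real.log (2 * ε ^ β)⁻¹)⁻¹) ≤ Lr + r := by
  have hkR : (0:ℝ) < k := by exact_mod_cast hk
  have ht : 0 < ε ^ β := Real.rpow_pos_of_pos hε0 β
  set u : ℝ := Real.log ε⁻¹ with hus
  set L2 : ℝ := Real.log (2 * ε ^ β)⁻¹ with hL2s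
  have hu : 0 < u := Real.log_pos (one_lt_inv_iff₀.2 ⟨hε0, hε1⟩)
  have hL2 : 0 < L2 := Real.log_pos (one_lt_inv_iff₀.2 ⟨by positivity, hc2⟩)
  have hlogt : Real.log (ε ^ β)⁻¹ = β * u := by
    rw [hus, Real.log_inv, Real.log_inv, Real.log_rpow hε0]; ring
  -- nets
  have hcsE : (covSet ρ (Set.univ : Set X) (ε ^ β)).Nonempty := by
    obtain ⟨D, hD, hc⟩ := exists_net h Set.univ ht
    exact ⟨D.card, D, hD, rfl, hc⟩
  obtain ⟨E, -, hEcard, hEcov⟩ := covNum_spec hcsE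
  have hM1 : 1 ≤ covNum ρ Set.univ (ε ^ β) :=
    one_le_covNum ⟨Classical.arbitrary X, Set.mem_univ _⟩ hcsE
  have hMR : (0:ℝ) < (covNum ρ Set.univ (ε ^ β) : ℝ) := by exact_mod_cast hM1
  have hcsD : (covSet (fun x y : Fin k → X => pPM ρ 1 x y) A ε).Nonempty := by
    obtain ⟨D, hD, hc⟩ := exists_net (isCPM_pPM_one h) A hε0
    exact ⟨D.card, D, hD, rfl, hc⟩
  obtain ⟨D, hD, hDcard, hDcov⟩ := covNum_spec hcsD
  have hN11 : 1 ≤ covNum (fun x y : Fin k → X => pPM ρ 1 x y) A ε := one_le_covNum hAne hcsD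
  have hN1R : (0:ℝ) < (covNum (fun x y : Fin k → X => pPM ρ 1 x y) A ε : ℝ) := by
    exact_mod_cast hN11
  -- abbreviations (plain reals)
  set M : ℝ := (covNum ρ Set.univ (ε ^ β) : ℝ) with hMs
  set N1 : ℝ := (covNum (fun x y : Fin k → X => pPM ρ 1 x y) A ε : ℝ) with hN1s
  set Nt : ℝ := (covNum (fun x y : Fin k → X => pPM ρ ⊤ x y) A (2 * ε ^ β) : ℝ) with hNts
  set lam : ℝ := ε ^ (1 - β) / M with hlams
  have hpow1 : 0 < ε ^ (1 - β) := Real.rpow_pos_of_pos hε0 _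
  have hpow1le : ε ^ (1 - β) ≤ 1 :=
    Real.rpow_le_one (le_of_lt hε0) (le_of_lt hε1) (by linarith)
  have hlam : 0 < lam := by positivity
  have hlam1 : lam ≤ 1 := by
    rw [hlams, div_le_one hMR]
    calc ε ^ (1 - β) ≤ 1 := hpow1le
      _ ≤ M := by rw [hMs]; exact_mod_cast hM1
  have hlamM : lam * M = ε ^ (1 - β) := div_mul_cancel₀ _ (ne_of_gt hMR)
  -- key covering estimate
  have hkey : Nt ≤ N1 * ((1 + ε ^ (1 - β)) ^ k / lam ^ (⌊((k:ℝ) * ε) / ε ^ β⌋₊)) := by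
    have h0 := key_cover h hk A hε0 ht hlam hlam1 E
      (fun x => hEcov x (Set.mem_univ x)) D hD hDcov
    rw [hDcard] at h0
    rw [hEcard, ← hMs, hlamM] at h0
    exact_mod_cast h0
  have hNt1 : (1:ℝ) ≤ Nt := by
    rw [hNts]
    have : 1 ≤ covNum (fun x y : Fin k → X => pPM ρ ⊤ x y) A (2 * ε ^ β) := by
      refine one_le_covNum hAne ?_
      obtain ⟨D', hD', hc'⟩ := exists_net (isCPM_pPM_top h) A (by positivity : (0:ℝ) < 2 * ε ^ β)
      exact ⟨D'.card, D', hD', rfl, hc'⟩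
    exact_mod_cast this
  have hNtR : (0:ℝ) < Nt := lt_of_lt_of_le one_pos hNt1
  -- the ρ₁ bound
  have hku : (0:ℝ) < (k:ℝ) * u := by positivity
  have hlogN1 : Real.log N1 ≤ a * ((k:ℝ) * u) := by
    have h1' : Real.log N1 * (((k:ℝ) * u)⁻¹) < a := h1
    rw [← div_eq_mul_inv, div_lt_iff₀ hku] at h1'
    exact le_of_lt h1'
  -- floor bound
  have hbR : ((⌊((k:ℝ) * ε) / ε ^ β⌋₊ : ℕ) : ℝ) ≤ (k:ℝ) * ε ^ (1 - β) := by
    have h1' : ((⌊((k:ℝ) * ε) / ε ^ β⌋₊ : ℕ) : ℝ) ≤ ((k:ℝ) * ε) / ε ^ β :=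
      Nat.floor_le (by positivity)
    have h2' : ((k:ℝ) * ε) / ε ^ β = (k:ℝ) * ε ^ (1 - β) := by
      rw [eq_comm, Real.rpow_sub hε0, Real.rpow_one]; ring
    exact h1'.trans (le_of_eq h2')
  -- log lam⁻¹ bound
  have hloglam0 : 0 ≤ Real.log lam⁻¹ := Real.log_nonneg (one_le_inv_iff₀.2 ⟨hlam, hlam1⟩)
  have hloglam : Real.log lam⁻¹ ≤ (C + 1) * u := by
    have h1' : Real.log lam⁻¹ = Real.log M - (1 - β) * Real.log ε := by
      rw [hlams, Real.log_inv, Real.log_div (ne_of_gt hpow1) (ne_of_gt hMR),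
        Real.log_rpow hε0]
      ring
    have h2' : Real.log M ≤ C * (β * u) := by rw [← hlogt]; exact hc1
    have hbu : 0 ≤ β * u := by positivity
    have hCb : C * (β * u) ≤ C * u := by
      have hβu : β * u ≤ u := by nlinarith
      exact mul_le_mul_of_nonneg_left hβu (by linarith)
    have h4' : (1 - β) * Real.log ε = β * u - u := by
      have hlogε : Real.log ε = -u := by rw [hus, Real.log_inv]; ring
      rw [hlogε]; ring
    linarith [h1', h2', hCb, hbu, h4']
  -- log chain
  have hlog1pm : Real.log (1 + ε ^ (1 - β)) ≤ ε ^ (1 - β) := by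
    have := Real.log_le_sub_one_of_pos (show (0:ℝ) < 1 + ε ^ (1 - β) by positivity)
    linarith
  have hlogNt : Real.log Nt ≤ a * ((k:ℝ) * u)
      + (k:ℝ) * ε ^ (1 - β) + ((k:ℝ) * ε ^ (1 - β)) * ((C + 1) * u) := by
    have ha1 : Real.log Nt ≤ Real.log (N1 * ((1 + ε ^ (1 - β)) ^ k
        / lam ^ (⌊((k:ℝ) * ε) / ε ^ β⌋₊))) := Real.log_le_log hNtR hkey
    have ha2 : Real.log (N1 * ((1 + ε ^ (1 - β)) ^ k / lam ^ (⌊((k:ℝ) * ε) / ε ^ β⌋₊)))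
        = Real.log N1 + (k:ℝ) * Real.log (1 + ε ^ (1 - β))
          + ((⌊((k:ℝ) * ε) / ε ^ β⌋₊ : ℕ) : ℝ) * Real.log lam⁻¹ := by
      rw [Real.log_mul (ne_of_gt hN1R) (by positivity),
        Real.log_div (by positivity) (by positivity),
        Real.log_pow, Real.log_pow, Real.log_inv]
      push_cast
      ring
    have ha3 : (k:ℝ) * Real.log (1 + ε ^ (1 - β)) ≤ (k:ℝ) * ε ^ (1 - β) :=
      mul_le_mul_of_nonneg_left hlog1pm (le_of_lt hkR)
    have ha4 : ((⌊((k:ℝ) * ε) / ε ^ β⌋₊ : ℕ) : ℝ) * Real.log lam⁻¹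
        ≤ ((k:ℝ) * ε ^ (1 - β)) * ((C + 1) * u) :=
      mul_le_mul hbR hloglam hloglam0 (by positivity)
    calc Real.log Nt ≤ _ := ha1
      _ = _ := ha2
      _ ≤ _ := by linarith
  -- conclude
  have hkL2 : (0:ℝ) < (k:ℝ) * L2 := by positivity
  have hstep : Real.log Nt * (((k:ℝ) * L2)⁻¹)
      ≤ (a * ((k:ℝ) * u) + (k:ℝ) * ε ^ (1 - β)
          + ((k:ℝ) * ε ^ (1 - β)) * ((C + 1) * u)) * (((k:ℝ) * L2)⁻¹) :=
    mul_le_mul_of_nonneg_right hlogNt (by positivity)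
  have halg : (a * ((k:ℝ) * u) + (k:ℝ) * ε ^ (1 - β)
          + ((k:ℝ) * ε ^ (1 - β)) * ((C + 1) * u)) * (((k:ℝ) * L2)⁻¹)
      = a * (u / L2) + ε ^ (1 - β) * (1 + (C + 1) * u) / L2 := by
    field_simp
    ring
  rw [halg] at hstep
  calc Real.log Nt * (((k:ℝ) * L2)⁻¹)
      ≤ a * (u / L2) + ε ^ (1 - β) * (1 + (C + 1) * u) / L2 := hstep
    _ ≤ (a + r / 2) + r / 4 := add_le_add hc3 hc4
    _ ≤ Lr + r := by linarith

end Hard3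

section Hard4

variable {Γ X : Type*} [Group Γ] [MulAction Γ X] [TopologicalSpace X] [CompactSpace X]

lemma main_step (S : SoficApprox Γ) {ρ : X → X → ℝ} (h : IsContPseudoMetric ρ) [Nonempty X]
    {ε β C a Lr r : ℝ}
    (hε0 : 0 < ε) (hε1 : ε < 1)
    (hβ0 : 0 < β) (hβ1 : β < 1)
    (hC1 : 1 ≤ C) (ha : 0 < a)
    (hc1 : Real.log (covNum ρ Set.univ (ε ^ β)) ≤ C * Real.log (ε ^ β)⁻¹)
    (hc2 : 2 * ε ^ β < 1)
    (hc3 : a * (Real.log ε⁻¹ / Real.log (2 * ε ^ β)⁻¹) ≤ a + r / 2)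
    (hc4 : ε ^ (1 - β) * (1 + (C + 1) * Real.log ε⁻¹) / Real.log (2 * ε ^ β)⁻¹ ≤ r / 4)
    (haLr : a + 3 * r / 4 ≤ Lr + r)
    (hf1 : mF S ρ 1 ε < (a : EReal)) :
    mF S ρ ⊤ (2 * ε ^ β) ≤ ((Lr + r : ℝ) : EReal) := by
  obtain ⟨F, hF⟩ := iInf_lt_iff.1 hf1
  obtain ⟨δ, hδ'⟩ := iInf_lt_iff.1 hF
  obtain ⟨hδ, hlim⟩ := iInf_lt_iff.1 hδ'
  have ht : 0 < ε ^ β := Real.rpow_pos_of_pos hε0 β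
  have hL2 : 0 < Real.log (2 * ε ^ β)⁻¹ :=
    Real.log_pos (one_lt_inv_iff₀.2 ⟨by positivity, hc2⟩)
  have hbound : Filter.limsup (mterm S ρ ⊤ F δ (2 * ε ^ β)) Filter.atTop
      ≤ ((Lr + r : ℝ) : EReal) := by
    refine Filter.limsup_le_of_le (by isBoundedDefault) ?_
    filter_upwards [Filter.eventually_lt_of_limsup_lt hlim,
      S.tendsto_d.eventually_ge_atTop 1] with i h1i hki
    have hk : 0 < S.d i := hki
    have hkR : (0:ℝ) < (S.d i : ℝ) := by exact_mod_cast hk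
    rcases (MapSp ρ F δ (S.σ i)).eq_empty_or_nonempty with hAe | hAne
    · unfold mterm
      rw [covNum_empty (ρ := fun x y : Fin (S.d i) → X => pPM ρ ⊤ x y) hAe]
      rw [show elog 0 = ⊥ from if_pos rfl]
      have hc : (0:ℝ) < ((S.d i : ℝ) * Real.log (2 * ε ^ β)⁻¹)⁻¹ := by positivity
      rw [EReal.bot_mul_coe_of_pos hc]
      exact bot_le
    · have hcsD : (covSet (fun x y : Fin (S.d i) → X => pPM ρ 1 x y)
          (MapSp ρ F δ (S.σ i)) ε).Nonempty := by
        obtain ⟨D, hD, hc⟩ := exists_net (isCPM_pPM_one h) _ hε0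
        exact ⟨D.card, D, hD, rfl, hc⟩
      have hN11 : 1 ≤ covNum (fun x y : Fin (S.d i) → X => pPM ρ 1 x y)
          (MapSp ρ F δ (S.σ i)) ε := one_le_covNum hAne hcsD
      have h1 : Real.log (covNum (fun x y : Fin (S.d i) → X => pPM ρ 1 x y)
          (MapSp ρ F δ (S.σ i)) ε) * (((S.d i : ℝ) * Real.log ε⁻¹)⁻¹) < a := by
        have := h1i
        unfold mterm at this
        rw [elog_of_pos hN11, ← EReal.coe_mul] at this
        exact_mod_cast this
      have hNt1 : 1 ≤ covNum (fun x y : Fin (S.d i) → X => pPM ρ ⊤ x y)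
          (MapSp ρ F δ (S.σ i)) (2 * ε ^ β) := by
        refine one_le_covNum hAne ?_
        obtain ⟨D', hD', hc'⟩ := exists_net (isCPM_pPM_top h) _
          (by positivity : (0:ℝ) < 2 * ε ^ β)
        exact ⟨D'.card, D', hD', rfl, hc'⟩
      have hres := per_index h hk (MapSp ρ F δ (S.σ i)) hAne hε0 hε1 hβ0 hβ1 hC1 ha
        hc1 hc2 hc3 hc4 haLr h1
      unfold mterm
      rw [elog_of_pos hNt1, ← EReal.coe_mul]
      exact_mod_cast hres
  refine le_trans ?_ hbound
  exact iInf_le_of_le F (iInf_le_of_le δ (iInf_le_of_le hδ le_rfl))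

end Hard4

section Hard5

variable {Γ X : Type*} [Group Γ] [MulAction Γ X] [TopologicalSpace X] [CompactSpace X]

lemma mdimP_top_le_one (S : SoficApprox Γ) {ρ : X → X → ℝ} (h : IsContPseudoMetric ρ)
    (hpack : Filter.limsup (fun ε : ℝ =>
        ((Real.log (covNum ρ Set.univ ε) / Real.log ε⁻¹ : ℝ) : EReal)) (𝓝[>] (0 : ℝ)) < ⊤) :
    mdimP S ρ ⊤ ≤ mdimP S ρ 1 := by
  have hIoo : ∀ᶠ ε in 𝓝[>] (0:ℝ), 0 < ε ∧ ε < 1 := by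
    filter_upwards [Ioo_mem_nhdsGT_of_mem (Set.mem_Ico.2 ⟨le_refl (0:ℝ), zero_lt_one⟩)]
      with ε hε
    exact ⟨hε.1, hε.2⟩
  rcases isEmpty_or_nonempty X with hX | hX
  · rw [mdimP_eq S ρ ⊤]
    refine le_trans (Filter.liminf_le_of_frequently_le' ?_) bot_le
    exact (hIoo.mono fun ε hε => mF_top_le_bot_of_isEmpty S ρ hX hε.1 hε.2).frequently
  rcases lt_or_ge (mdimP S ρ 1) 0 with hL | hL0
  · have hfr : ∃ᶠ ε in 𝓝[>](0:ℝ), mF S ρ 1 ε < 0 := by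
      rw [mdimP_eq] at hL
      exact Filter.frequently_lt_of_liminf_lt (by isBoundedDefault) hL
    have hfr2 := hfr.and_eventually hIoo
    rw [mdimP_eq S ρ ⊤]
    refine le_trans (Filter.liminf_le_of_frequently_le' ?_) bot_le
    exact hfr2.mono fun ε hε => mF_top_le_bot_of_lt S h hε.2.1 hε.2.2 hε.1
  rcases eq_top_or_lt_top (mdimP S ρ 1) with hLt | hLlt
  · rw [hLt]; exact le_top
  have hLne : mdimP S ρ 1 ≠ ⊥ := fun hb => by rw [hb] at hL0; exact absurd hL0 (by simp)
  set Lr : ℝ := (mdimP S ρ 1).toReal with hLrs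
  have hLr : (Lr : EReal) = mdimP S ρ 1 := EReal.coe_toReal hLlt.ne hLne
  have hLr0 : 0 ≤ Lr := by
    have : (0 : EReal) ≤ (Lr : EReal) := by rw [hLr]; exact hL0
    exact_mod_cast this
  -- the packing constant
  obtain ⟨C0, hC0, -⟩ := EReal.exists_between_coe_real hpack
  have hCev0 := Filter.eventually_lt_of_limsup_lt hC0
  set C : ℝ := max C0 1 with hCs
  have hC1 : 1 ≤ C := le_max_right _ _
  have hCev : ∀ᶠ ε in 𝓝[>](0:ℝ), Real.log (covNum ρ Set.univ ε) ≤ C * Real.log ε⁻¹ := by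
    filter_upwards [hCev0, hIoo] with ε h1 h2
    have hu : 0 < Real.log ε⁻¹ := Real.log_pos (one_lt_inv_iff₀.2 ⟨h2.1, h2.2⟩)
    have h1' : Real.log (covNum ρ Set.univ ε) / Real.log ε⁻¹ < C0 := by exact_mod_cast h1
    rw [div_lt_iff₀ hu] at h1'
    calc Real.log (covNum ρ Set.univ ε) ≤ C0 * Real.log ε⁻¹ := le_of_lt h1'
      _ ≤ C * Real.log ε⁻¹ := mul_le_mul_of_nonneg_right (le_max_left _ _) (le_of_lt hu)
  -- the ε-r game
  suffices H : ∀ r : ℝ, 0 < r → mdimP S ρ ⊤ ≤ ((Lr + r : ℝ) : EReal) by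
    by_contra hcon
    push_neg at hcon
    rw [← hLr] at hcon
    obtain ⟨z, hz1, hz2⟩ := EReal.exists_between_coe_real hcon
    have hrz : 0 < z - Lr := by
      have := EReal.coe_lt_coe_iff.1 hz1
      linarith
    have hzle := H (z - Lr) hrz
    rw [show Lr + (z - Lr) = z by ring] at hzle
    exact absurd (lt_of_le_of_lt hzle hz2) (lt_irrefl _)
  intro r hr
  set a : ℝ := Lr + r/4 with has
  have ha : 0 < a := by rw [has]; linarith
  set β : ℝ := a / (a + r/4) with hβs
  have haq : 0 < a + r/4 := by linarith
  have hβ0 : 0 < β := by rw [hβs]; positivity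
  have hβ1 : β < 1 := by
    rw [hβs, div_lt_one haq]
    linarith
  have hβa : a * (1/β) = a + r/4 := by
    rw [hβs]
    field_simp
  -- limits
  have htu : Filter.Tendsto (fun ε:ℝ => Real.log ε⁻¹) (𝓝[>](0:ℝ)) Filter.atTop :=
    Real.tendsto_log_atTop.comp tendsto_inv_nhdsGT_zero
  have hpowβ := tendsto_rpow_zero' hβ0
  have hpow1β := tendsto_rpow_zero' (show 0 < 1 - β by linarith)
  have hpowβ0 : Filter.Tendsto (fun ε:ℝ => ε^β) (𝓝[>](0:ℝ)) (𝓝 0) :=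
    (tendsto_nhdsWithin_iff.1 hpowβ).1
  have hpow1β0 : Filter.Tendsto (fun ε:ℝ => ε^(1-β)) (𝓝[>](0:ℝ)) (𝓝 0) :=
    (tendsto_nhdsWithin_iff.1 hpow1β).1
  have heqL2 : ∀ᶠ ε in 𝓝[>](0:ℝ),
      Real.log (2*ε^β)⁻¹ = β * Real.log ε⁻¹ - Real.log 2 := by
    filter_upwards [self_mem_nhdsWithin] with ε (hε : (0:ℝ) < ε)
    rw [Real.log_inv, Real.log_mul two_ne_zero (ne_of_gt (Real.rpow_pos_of_pos hε β)),
      Real.log_rpow hε, Real.log_inv]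
    ring
  have hden : Filter.Tendsto (fun x:ℝ => β - Real.log 2 / x) Filter.atTop (𝓝 β) := by
    have h0 : Filter.Tendsto (fun x:ℝ => Real.log 2 / x) Filter.atTop (𝓝 0) :=
      Filter.Tendsto.div_atTop tendsto_const_nhds Filter.tendsto_id
    simpa using tendsto_const_nhds.sub h0
  have hxfun : Filter.Tendsto (fun x:ℝ => x / (β*x - Real.log 2)) Filter.atTop (𝓝 (1/β)) := by
    have h2 := hden.inv₀ (ne_of_gt hβ0)
    rw [one_div]
    refine Filter.Tendsto.congr' ?_ h2
    filter_upwards [Filter.eventually_ge_atTop (max 1 ((Real.log 2 + 1)/β))] with x hx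
    have hx1 : (1:ℝ) ≤ x := le_trans (le_max_left _ _) hx
    have hx0 : (0:ℝ) < x := by linarith
    have hx2 : (Real.log 2 + 1)/β ≤ x := le_trans (le_max_right _ _) hx
    have hx3 : Real.log 2 + 1 ≤ β * x := by
      rw [div_le_iff₀ hβ0] at hx2
      linarith [hx2]
    have hne : β * x - Real.log 2 ≠ 0 := by linarith
    have hrw : β - Real.log 2 / x = (β * x - Real.log 2) / x := by
      field_simp
    rw [hrw, inv_div]
  have hnum : Filter.Tendsto (fun x:ℝ => 1/x + (C+1)) Filter.atTop (𝓝 (C+1)) := by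
    have h0 : Filter.Tendsto (fun x:ℝ => 1/x) Filter.atTop (𝓝 (0:ℝ)) :=
      Filter.Tendsto.div_atTop tendsto_const_nhds Filter.tendsto_id
    simpa using h0.add tendsto_const_nhds
  have hyfun : Filter.Tendsto (fun x:ℝ => (1+(C+1)*x) / (β*x - Real.log 2))
      Filter.atTop (𝓝 ((C+1)/β)) := by
    have h2 := hnum.div hden (ne_of_gt hβ0)
    refine Filter.Tendsto.congr' ?_ h2
    filter_upwards [Filter.eventually_ge_atTop (1:ℝ)] with x hx1
    have hx0 : (0:ℝ) < x := by linarith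
    have hnum' : x * (1/x + (C+1)) = 1 + (C+1)*x := by
      field_simp
    have hden' : x * (β - Real.log 2 / x) = β*x - Real.log 2 := by
      field_simp
    simp only [Pi.div_apply]
    rw [← mul_div_mul_left (1/x + (C+1)) _ (ne_of_gt hx0), hnum', hden']
  -- eventual conditions
  have hC3T : Filter.Tendsto (fun ε:ℝ => Real.log ε⁻¹ / Real.log (2*ε^β)⁻¹)
      (𝓝[>](0:ℝ)) (𝓝 (1/β)) := by
    refine Filter.Tendsto.congr' ?_ (hxfun.comp htu)
    filter_upwards [heqL2] with ε hε
    simp only [Function.comp_apply]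
    rw [hε]
  have ev_c3 : ∀ᶠ ε in 𝓝[>](0:ℝ),
      a * (Real.log ε⁻¹ / Real.log (2*ε^β)⁻¹) ≤ a + r/2 := by
    have hlt : (1:ℝ)/β < 1/β + r/(4*a) := by
      have : 0 < r/(4*a) := by positivity
      linarith
    filter_upwards [hC3T.eventually_le_const hlt] with ε hε
    calc a * (Real.log ε⁻¹ / Real.log (2*ε^β)⁻¹) ≤ a * (1/β + r/(4*a)) :=
          mul_le_mul_of_nonneg_left hε ha.le
      _ = a * (1/β) + r/4 := by
          field_simp
      _ = a + r/4 + r/4 := by rw [hβa]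
      _ ≤ a + r/2 := by linarith
  have hC4T : Filter.Tendsto
      (fun ε:ℝ => ε^(1-β) * (1+(C+1)*Real.log ε⁻¹) / Real.log (2*ε^β)⁻¹)
      (𝓝[>](0:ℝ)) (𝓝 0) := by
    have hsecond : Filter.Tendsto (fun ε:ℝ => (1+(C+1)*Real.log ε⁻¹) / Real.log (2*ε^β)⁻¹)
        (𝓝[>](0:ℝ)) (𝓝 ((C+1)/β)) := by
      refine Filter.Tendsto.congr' ?_ (hyfun.comp htu)
      filter_upwards [heqL2] with ε hε
      simp only [Function.comp_apply]
      rw [hε]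
    have hprod := hpow1β0.mul hsecond
    rw [zero_mul] at hprod
    refine Filter.Tendsto.congr (fun ε => ?_) hprod
    rw [mul_div_assoc]
  have ev_c4 : ∀ᶠ ε in 𝓝[>](0:ℝ),
      ε^(1-β) * (1+(C+1)*Real.log ε⁻¹) / Real.log (2*ε^β)⁻¹ ≤ r/4 :=
    hC4T.eventually_le_const (by positivity)
  have ev_c2 : ∀ᶠ ε in 𝓝[>](0:ℝ), 2*ε^β < 1 := by
    filter_upwards [hpowβ0.eventually_lt_const (show (0:ℝ) < 1/2 by norm_num)] with ε hε
    linarith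
  have ev_c1 : ∀ᶠ ε in 𝓝[>](0:ℝ),
      Real.log (covNum ρ Set.univ (ε^β)) ≤ C * Real.log (ε^β)⁻¹ :=
    hpowβ.eventually hCev
  -- the frequently event
  have hfreq : ∃ᶠ ε in 𝓝[>](0:ℝ), mF S ρ 1 ε < (a : EReal) := by
    have hlt : mdimP S ρ 1 < (a : EReal) := by
      rw [← hLr]
      exact_mod_cast (show Lr < a by rw [has]; linarith)
    rw [mdimP_eq] at hlt
    exact Filter.frequently_lt_of_liminf_lt (by isBoundedDefault) hlt
  have hfr2 := hfreq.and_eventually (hIoo.and (ev_c1.and (ev_c2.and (ev_c3.and ev_c4))))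
  have hfr3 : ∃ᶠ ε in 𝓝[>](0:ℝ), mF S ρ ⊤ (2*ε^β) ≤ ((Lr + r : ℝ) : EReal) := by
    refine hfr2.mono ?_
    rintro ε ⟨h1, ⟨hio, h2, h3, h4, h5⟩⟩
    exact main_step S h hio.1 hio.2 hβ0 hβ1 hC1 ha h2 h3 h4 h5
      (by rw [has]; linarith) h1
  have hmap : Filter.Tendsto (fun ε:ℝ => 2*ε^β) (𝓝[>](0:ℝ)) (𝓝[>](0:ℝ)) := by
    rw [tendsto_nhdsWithin_iff]
    constructor
    · simpa using hpowβ0.const_mul 2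
    · filter_upwards [self_mem_nhdsWithin] with ε (hε : (0:ℝ) < ε)
      have := Real.rpow_pos_of_pos hε β
      show (0:ℝ) < 2*ε^β
      positivity
  rw [mdimP_eq S ρ ⊤]
  refine Filter.liminf_le_of_frequently_le' ?_
  exact (Filter.frequently_map.2 hfr3).filter_mono hmap

end Hard5

/-- `mdim_{Σ,M,p}(X, Γ)`, the sofic `p`-metric mean dimension. -/
noncomputable def mdimMP (Γ X : Type*) [Group Γ] [MulAction Γ X] [TopologicalSpace X]
    (S : SoficApprox Γ) (p : ℝ≥0∞) : EReal :=
  ⨅ (ρ : X → X → ℝ) (_ : IsDynGen Γ ρ), mdimP S ρ p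

/-- If `ρ` is a dynamically generating continuous pseudometric on the compact
metrizable `Γ`-space `X` with finite packing dimension, then
`mdim_{Σ,1}(X,ρ) = mdim_{Σ,∞}(X,ρ)`. -/
theorem stmt0 {Γ X : Type*} [Group Γ] [Countable Γ]
    [TopologicalSpace X] [CompactSpace X] [TopologicalSpace.MetrizableSpace X]
    [MulAction Γ X] [ContinuousConstSMul Γ X]
    (S : SoficApprox Γ) (ρ : X → X → ℝ) (hρ : IsDynGen Γ ρ)
    (hpack : Filter.limsup (fun ε : ℝ =>
        ((Real.log (covNum ρ Set.univ ε) / Real.log ε⁻¹ : ℝ) : EReal)) (𝓝[>] (0 : ℝ)) < ⊤) :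
    mdimP S ρ 1 = mdimP S ρ ⊤ := by
  exact le_antisymm (mdimP_one_le_top S hρ.1) (mdimP_top_le_one S hρ.1 hpack)
end

section
/- There exists a constant C > 0 such that for all positive integers m and n and every nonempty subset S ⊆ {1,…,m} × {1,…,n}, the Lebesgue measure on ℝ^S of the set {x ∈ ℝ^S : for every j ∈ {1,…,m}, Σ_{i : (j,i) ∈ S} |x(j,i)| ≤ n} is at most (C·n·m/|S|)^{|S|}. -/
open scoped ENNReal

/-- there is a constant `C > 0` such that for all `m, n ≥ 1` and every nonempty
`S ⊆ {1,…,m} × {1,…,n}`, the Lebesgue measure of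
`{x ∈ ℝ^S : ∀ j, ∑_{i : (j,i) ∈ S} |x(j,i)| ≤ n}` is at most `(C n m / |S|)^{|S|}`. -/
theorem stmt3 :
    ∃ C : ℝ, 0 < C ∧ ∀ (m n : ℕ), 0 < m → 0 < n → ∀ S : Finset (Fin m × Fin n), S.Nonempty →
      MeasureTheory.volume
        {x : ↥S → ℝ | ∀ j : Fin m,
          ∑ s ∈ Finset.univ.filter (fun s : ↥S => (s : Fin m × Fin n).1 = j), |x s| ≤ (n : ℝ)}
        ≤ ENNReal.ofReal ((C * n * m / S.card) ^ (S.card : ℕ)) := by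
  refine ⟨2 * Real.exp 1, by positivity, fun m n hm hn S hS => ?_⟩
  haveI : Nonempty ↥S := ⟨⟨hS.choose, hS.choose_spec⟩⟩
  set k : ℕ := S.card with hk
  have hkpos : 0 < k := Finset.card_pos.mpr hS
  have hcard : Fintype.card ↥S = k := Fintype.card_coe S
  -- the set is contained in the ℓ¹ ball of radius m*n
  have hsub : {x : ↥S → ℝ | ∀ j : Fin m,
      ∑ s ∈ Finset.univ.filter (fun s : ↥S => (s : Fin m × Fin n).1 = j), |x s| ≤ (n : ℝ)} ⊆
      {x : ↥S → ℝ | (∑ s, |x s| ^ (1 : ℝ)) ^ (1 / (1 : ℝ)) ≤ (m * n : ℝ)} := by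
    intro x hx
    simp only [Set.mem_setOf_eq, Real.rpow_one, one_div_one] at *
    have : (∑ s, |x s|) = ∑ j : Fin m,
        ∑ s ∈ Finset.univ.filter (fun s : ↥S => (s : Fin m × Fin n).1 = j), |x s| :=
      (Finset.sum_fiberwise Finset.univ (fun s : ↥S => (s : Fin m × Fin n).1)
        (fun s => |x s|)).symm
    rw [this]
    calc ∑ j : Fin m, ∑ s ∈ Finset.univ.filter
          (fun s : ↥S => (s : Fin m × Fin n).1 = j), |x s|
        ≤ ∑ _j : Fin m, (n : ℝ) := Finset.sum_le_sum fun j _ => hx j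
      _ = (m * n : ℝ) := by simp [mul_comm]
  refine le_trans (MeasureTheory.measure_mono hsub) ?_
  rw [MeasureTheory.volume_sum_rpow_le ↥S le_rfl ((m : ℝ) * n)]
  rw [hcard]
  have hΓ1 : Real.Gamma (1 / 1 + 1) = 1 := by
    norm_num [Real.Gamma_two]
  have hΓ2 : Real.Gamma ((k : ℝ) / 1 + 1) = (Nat.factorial k : ℝ) := by
    rw [div_one]; exact_mod_cast Real.Gamma_nat_eq_factorial k
  rw [hΓ1, hΓ2]
  have hmn : (0 : ℝ) ≤ (m : ℝ) * n := by positivity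
  rw [← ENNReal.ofReal_pow hmn, ← ENNReal.ofReal_mul (by positivity)]
  refine ENNReal.ofReal_le_ofReal ?_
  -- real inequality : (m n)^k * (2^k / k!) ≤ (2 e n m / k)^k
  have hfac : (0 : ℝ) < Nat.factorial k := by exact_mod_cast Nat.factorial_pos k
  have hkR : (0 : ℝ) < k := by exact_mod_cast hkpos
  have hexp : (k : ℝ) ^ k / Nat.factorial k ≤ Real.exp k :=
    Real.pow_div_factorial_le_exp (x := (k:ℝ)) (by positivity) k
  have h1 : ((m : ℝ) * n) ^ k * ((2 * 1) ^ k / Nat.factorial k)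
      = (2 * m * n) ^ k / Nat.factorial k := by
    rw [mul_one]; ring
  rw [h1]
  have h2 : (2 * Real.exp 1 * n * m / k : ℝ) ^ k
      = (2 * m * n : ℝ) ^ k * Real.exp k / (k : ℝ) ^ k := by
    rw [div_pow, mul_pow, mul_pow, mul_pow, ← Real.exp_one_pow]
    ring
  rw [h2]
  rw [div_le_div_iff₀ hfac (by positivity)]
  calc (2 * (m : ℝ) * n) ^ k * (k : ℝ) ^ k
      = (2 * (m : ℝ) * n) ^ k * ((k : ℝ) ^ k / Nat.factorial k) * Nat.factorial k := by
        field_simp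
    _ ≤ (2 * (m : ℝ) * n) ^ k * Real.exp k * Nat.factorial k := by
        have h3 : (0 : ℝ) ≤ (2 * (m : ℝ) * n) ^ k := by positivity
        gcongr
end

section
/- Let X be a compact metrizable space with compatible metric ρ, let 𝒰 be a finite open cover of X, and let (f_U)_{U∈𝒰} be a family of Lipschitz (with respect to ρ) functions f_U : X → [0,1] such that max_{U∈𝒰} f_U(x) = 1 for all x ∈ X and f_U(x) = 0 for x ∈ X \ U. Let (d_i)_{i≥1} be a sequence of positive integers tending to infinity, and define Ψ_i : X^{d_i} → [0,1]^{{1,…,d_i}×𝒰} by Ψ_i(x)(j,U) = f_U(x(j)). Then for every α > 0 and η > 0 there exists ε₀ > 0 with the following property: whenever 0 < ε < ε₀ and Ξ_i ⊆ X^{d_i} (for i ≥ 1) satisfy limsup_{i→∞} log S_ε(Ξ_i, ρ_1)/(d_i log(1/ε)) ≤ α, then for all sufficiently large i there exists ξ ∈ (0,1)^{{1,…,d_i}×𝒰} such that for every subset S ⊆ {1,…,d_i}×𝒰 with |S| ≥ (α+η)·d_i, the restriction ξ|_S does not belong to {Ψ_i(x)|_S : x ∈ Ξ_i}. -/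
/-!
Let `L` be a common Lipschitz constant of the `f_U`, fix `θ < 1` with
`α + η/4 < θ (α + η/2)` and put `δ = ε^θ`. Take a minimal `ε`-net `D` of `Ξ_i` for `ρ₁`, so
`|D| < ε^{-(α+η/4) d_i}` for large `i`, and look for `ξ` on a grid of `N ≈ (4Lδ)⁻¹` points of
`(0,1)` spaced more than `2Lδ` apart. A union bound over `φ ∈ D` and over sets of
`⌈(α+η/2) d_i⌉` coordinates finds a `ξ` that is `Lδ`-close to `Ψ_i(φ)` in fewer than
`(α+η/2) d_i` coordinates, for every `φ ∈ D`, as soon as `|D| 2^{d_i |𝒰|} < N^{(α+η/2) d_i}`,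
which holds for small `ε` because `θ (α+η/2) > α+η/4`.
If `Ψ_i(x)` agreed with `ξ` on `S`, pick `φ ∈ D` with `ρ₁(x, φ) ≤ ε`. By Markov's inequality at
most `d_i ε^{1-θ}` columns `j` have `ρ(x_j, φ_j) > δ`, and off those columns `ξ` is `Lδ`-close
to `Ψ_i(φ)` on `S`; hence `|S| < (α+η/2) d_i + |𝒰| d_i ε^{1-θ} < (α+η) d_i`.
-/

open Filter Topology
open scoped ENNReal

/-- A compatible metric on a topological space: a metric whose metric topology is the given
topology. -/
structure IsCompatMetric {X : Type*} [TopologicalSpace X] (ρ : X → X → ℝ) : Prop where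
  refl : ∀ x, ρ x x = 0
  eq_of_eq_zero : ∀ x y, ρ x y = 0 → x = y
  symm : ∀ x y, ρ x y = ρ y x
  triangle : ∀ x y z, ρ x z ≤ ρ x y + ρ y z
  isOpen_iff : ∀ s : Set X, IsOpen s ↔ ∀ x ∈ s, ∃ ε > 0, ∀ y, ρ x y < ε → y ∈ s


open Filter Topology Finset

section Combinatorics

variable {Z α β : Type*} [Fintype Z] [DecidableEq Z]
  {R : α → β → Prop} [DecidableRel R] {T : Finset α}

theorem card_filter_forall_rel_le (hR : ∀ b, ∀ t ∈ T, ∀ t' ∈ T, R t b → R t' b → t = t')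
    (w : Z → β) (S : Finset Z) :
    #{ξ ∈ Fintype.piFinset fun _ ↦ T | ∀ z ∈ S, R (ξ z) (w z)} ≤
      #T ^ (Fintype.card Z - #S) := by
  calc #{ξ ∈ Fintype.piFinset fun _ ↦ T | ∀ z ∈ S, R (ξ z) (w z)}
      ≤ #(Fintype.piFinset fun _ : {z // z ∉ S} ↦ T) := by
        refine card_le_card_of_injOn (fun ξ z ↦ ξ z) (fun ξ hξ ↦ ?_) fun ξ hξ ξ' hξ' h ↦ ?_
        · exact mem_coe.2 <| Fintype.mem_piFinset.2 fun z ↦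
            Fintype.mem_piFinset.1 (mem_filter.1 hξ).1 z
        · simp only [coe_filter, Fintype.mem_piFinset] at hξ hξ'
          funext z
          by_cases hz : z ∈ S
          · exact hR (w z) _ (hξ.1 z) _ (hξ'.1 z) (hξ.2 z hz) (hξ'.2 z hz)
          · exact congrFun h ⟨z, hz⟩
    _ = #T ^ (Fintype.card Z - #S) := by
        simp [Fintype.card_subtype_compl]

theorem exists_forall_card_lt_of_forall_rel
    (hR : ∀ b, ∀ t ∈ T, ∀ t' ∈ T, R t b → R t' b → t = t') (W : Finset (Z → β)) (m : ℕ)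
    (hcount : #W * (Fintype.card Z).choose m * #T ^ (Fintype.card Z - m) < #T ^ Fintype.card Z) :
    ∃ ξ : Z → α, (∀ z, ξ z ∈ T) ∧
      ∀ w ∈ W, ∀ S : Finset Z, (∀ z ∈ S, R (ξ z) (w z)) → #S < m := by
  classical
  set G := Fintype.piFinset fun _ : Z ↦ T
  set Bad := W.biUnion fun w ↦ (univ.powersetCard m).biUnion fun S ↦
    {ξ ∈ G | ∀ z ∈ S, R (ξ z) (w z)}
  have hBad : #Bad < #G := by
    calc #Bad ≤ #W * ((Fintype.card Z).choose m * #T ^ (Fintype.card Z - m)) := by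
          refine card_biUnion_le_card_mul _ _ _ fun w _ ↦ ?_
          refine (card_biUnion_le_card_mul _ _ _ fun S hS ↦ ?_).trans_eq
            (by rw [card_powersetCard, card_univ])
          rw [← (mem_powersetCard.1 hS).2]
          exact card_filter_forall_rel_le hR w S
      _ < #G := by simpa [G, mul_assoc] using hcount
  obtain ⟨ξ, hξG, hξBad⟩ := exists_mem_notMem_of_card_lt_card hBad
  refine ⟨ξ, Fintype.mem_piFinset.1 hξG, fun w hw S hS ↦ ?_⟩
  by_contra! hmS
  obtain ⟨S₀, hS₀S, hS₀⟩ := exists_subset_card_eq hmS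
  exact hξBad <| mem_biUnion.2 ⟨w, hw, mem_biUnion.2 ⟨S₀, mem_powersetCard.2 ⟨subset_univ _, hS₀⟩,
    mem_filter.2 ⟨hξG, fun z hz ↦ hS z (hS₀S hz)⟩⟩⟩

theorem Nat.mul_choose_mul_pow_lt {n K m N : ℕ} (hN : 0 < N) (h : n * 2 ^ K < N ^ m) :
    n * K.choose m * N ^ (K - m) < N ^ K := by
  rcases le_or_gt m K with hmK | hmK
  · calc n * K.choose m * N ^ (K - m) ≤ n * 2 ^ K * N ^ (K - m) := by
          gcongr; exact Nat.choose_le_two_pow K m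
      _ < N ^ m * N ^ (K - m) := Nat.mul_lt_mul_of_pos_right h (by positivity)
      _ = N ^ K := by rw [← pow_add, Nat.add_sub_cancel' hmK]
  · simp [Nat.choose_eq_zero_of_lt hmK, hN]

end Combinatorics

theorem exists_finset_Ioo_card_eq (N : ℕ) :
    ∃ T : Finset ℝ, #T = N ∧ (∀ t ∈ T, t ∈ Set.Ioo (0 : ℝ) 1) ∧
      ∀ t ∈ T, ∀ t' ∈ T, t ≠ t' → (N : ℝ)⁻¹ ≤ |t - t'| := by
  set g : ℕ → ℝ := fun i ↦ (i + 1 / 2) / N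
  refine ⟨(range N).image g, ?_, ?_, ?_⟩
  · refine (card_image_of_injOn fun i hi j _ h ↦ ?_).trans (card_range N)
    have hN : (N : ℝ) ≠ 0 := Nat.cast_ne_zero.2 (Nat.ne_zero_of_lt (mem_range.1 hi))
    simpa [g, div_left_inj' hN] using h
  · simp only [mem_image, mem_range]
    rintro _ ⟨i, hi, rfl⟩
    have hi' : (i : ℝ) + 1 ≤ N := by exact_mod_cast hi
    have hN : (0 : ℝ) < N := by linarith [i.cast_nonneg (α := ℝ)]
    exact ⟨by positivity, (div_lt_one hN).2 (by linarith)⟩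
  · simp only [mem_image, mem_range]
    rintro _ ⟨i, -, rfl⟩ _ ⟨j, -, rfl⟩ hij
    have hij' : (1 : ℝ) ≤ |(i : ℝ) - j| := by
      exact_mod_cast Int.one_le_abs (sub_ne_zero.2 <| Int.ofNat_inj.not.2 fun h ↦ hij (by rw [h]))
    calc (N : ℝ)⁻¹ ≤ |(i : ℝ) - j| / N := by
          rw [inv_eq_one_div]; gcongr
      _ = |g i - g j| := by
          simp only [g, ← sub_div, abs_div, Nat.abs_cast]; ring_nf

section Nets

variable {Z : Type*}

theorem exists_finset_forall_le_of_cover {ι : Type*} [Fintype ι] {ρ : Z → Z → ℝ} {ε : ℝ}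
    {A : Set Z} (C : ι → Set Z) (hA : A ⊆ ⋃ i, C i)
    (hC : ∀ i, ∀ a ∈ C i, ∀ b ∈ C i, ρ a b ≤ ε) :
    ∃ D : Finset Z, ↑D ⊆ A ∧ ∀ a ∈ A, ∃ z ∈ D, ρ a z ≤ ε := by
  classical
  rcases A.eq_empty_or_nonempty with rfl | ⟨a₀, ha₀⟩
  · exact ⟨∅, by simp, by simp⟩
  have : ∀ i, ∃ p ∈ A, (C i ∩ A).Nonempty → p ∈ C i := fun i ↦
    if h : (C i ∩ A).Nonempty then ⟨h.some, h.some_mem.2, fun _ ↦ h.some_mem.1⟩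
    else ⟨a₀, ha₀, fun h' ↦ absurd h' h⟩
  choose p hpA hpC using this
  refine ⟨univ.image p, by simpa [Set.range_subset_iff] using hpA, fun a ha ↦ ?_⟩
  obtain ⟨i, hai⟩ := Set.mem_iUnion.1 (hA ha)
  exact ⟨p i, mem_image_of_mem p (mem_univ i), hC i a hai _ (hpC i ⟨a, hai, ha⟩)⟩

theorem pPM_one (ρ : Z → Z → ℝ) {k : ℕ} (x y : Fin k → Z) :
    pPM ρ 1 x y = (k : ℝ)⁻¹ * ∑ j, ρ (x j) (y j) := by
  simp [pPM]

theorem sum_le_of_pPM_one_le {ρ : Z → Z → ℝ} {k : ℕ} {x y : Fin k → Z} {ε : ℝ}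
    (h : pPM ρ 1 x y ≤ ε) : ∑ j, ρ (x j) (y j) ≤ k * ε := by
  rcases k.eq_zero_or_pos with rfl | hk
  · simp
  · rwa [pPM_one, inv_mul_le_iff₀ (by exact_mod_cast hk)] at h

theorem pPM_one_le_of_forall_le {ρ : Z → Z → ℝ} {k : ℕ} {x y : Fin k → Z} {ε : ℝ}
    (hε : 0 ≤ ε) (h : ∀ j, ρ (x j) (y j) ≤ ε) : pPM ρ 1 x y ≤ ε := by
  rw [pPM_one]
  calc (k : ℝ)⁻¹ * ∑ j, ρ (x j) (y j) ≤ (k : ℝ)⁻¹ * (k * ε) := by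
        gcongr
        simpa using sum_le_sum fun j (_ : j ∈ univ) ↦ h j
    _ ≤ ε := by
        rcases k.eq_zero_or_pos with rfl | hk
        · simpa using hε
        · rw [inv_mul_cancel_left₀ (by positivity)]

theorem card_filter_lt_mul_le {ρ : Z → Z → ℝ} (hρ : ∀ x y, 0 ≤ ρ x y) {k : ℕ}
    {x y : Fin k → Z} {ε : ℝ} (h : pPM ρ 1 x y ≤ ε) (δ : ℝ) :
    (#{j | δ < ρ (x j) (y j)} : ℝ) * δ ≤ k * ε :=
  calc (#{j | δ < ρ (x j) (y j)} : ℝ) * δ ≤ ∑ j ∈ {j | δ < ρ (x j) (y j)}, ρ (x j) (y j) := by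
        simpa using card_nsmul_le_sum _ _ δ fun j hj ↦ (mem_filter.1 hj).2.le
    _ ≤ ∑ j, ρ (x j) (y j) := sum_le_sum_of_subset_of_nonneg (subset_univ _) fun _ _ _ ↦ hρ _ _
    _ ≤ k * ε := sum_le_of_pPM_one_le h

theorem exists_card_eq_covNum {ρ : Z → Z → ℝ} {A : Set Z} {ε : ℝ}
    (h : ∃ D : Finset Z, ↑D ⊆ A ∧ ∀ a ∈ A, ∃ z ∈ D, ρ a z ≤ ε) :
    ∃ D : Finset Z, ↑D ⊆ A ∧ #D = covNum ρ A ε ∧ ∀ a ∈ A, ∃ z ∈ D, ρ a z ≤ ε := by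
  obtain ⟨D, hDA, hD⟩ := h
  exact Nat.sInf_mem (s := {n | ∃ D : Finset Z, ↑D ⊆ A ∧ #D = n ∧ ∀ a ∈ A, ∃ z ∈ D, ρ a z ≤ ε})
    ⟨#D, D, hDA, rfl, hD⟩

end Nets

namespace IsCompatMetric

variable {X : Type*} [TopologicalSpace X] {ρ : X → X → ℝ}

theorem nonneg (hρ : IsCompatMetric ρ) (x y : X) : 0 ≤ ρ x y := by
  linarith [hρ.triangle x y x, hρ.refl x, hρ.symm x y]

theorem isOpen_ball (hρ : IsCompatMetric ρ) (x : X) (ε : ℝ) : IsOpen {y | ρ x y < ε} :=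
  (hρ.isOpen_iff _).2 fun y hy ↦ ⟨ε - ρ x y, sub_pos.2 hy, fun z hz ↦ by
    simp only [Set.mem_ofPred_eq] at hy ⊢
    linarith [hρ.triangle x y z]⟩

theorem exists_finset_forall_lt [CompactSpace X] (hρ : IsCompatMetric ρ) {ε : ℝ} (hε : 0 < ε) :
    ∃ t : Finset X, ∀ x, ∃ y ∈ t, ρ y x < ε := by
  obtain ⟨t, ht⟩ := isCompact_univ.elim_finite_subcover (fun y ↦ {x | ρ y x < ε})
    (fun y ↦ hρ.isOpen_ball y ε) fun x _ ↦ Set.mem_iUnion.2 ⟨x, by simpa [hρ.refl] using hε⟩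
  exact ⟨t, fun x ↦ by simpa using ht (Set.mem_univ x)⟩

theorem exists_finset_pPM_one_le [CompactSpace X] (hρ : IsCompatMetric ρ) {ε : ℝ}
    (hε : 0 < ε) {k : ℕ} (A : Set (Fin k → X)) :
    ∃ D : Finset (Fin k → X), ↑D ⊆ A ∧ ∀ a ∈ A, ∃ z ∈ D, pPM ρ 1 a z ≤ ε := by
  obtain ⟨t, ht⟩ := hρ.exists_finset_forall_lt (half_pos hε)
  choose c hct hc using ht
  refine exists_finset_forall_le_of_cover (ι := Fin k → t)
    (fun g ↦ {a | ∀ j, ρ (g j) (a j) < ε / 2}) (fun a _ ↦ Set.mem_iUnion.2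
      ⟨fun j ↦ ⟨c (a j), hct _⟩, fun j ↦ hc (a j)⟩) fun g a ha b hb ↦
    pPM_one_le_of_forall_le hε.le fun j ↦ ?_
  linarith [hρ.triangle (a j) (g j) (b j), hρ.symm (a j) (g j), ha j, hb j]

end IsCompatMetric

theorem exists_pos_forall_abs_sub_le {ι X : Type*} [Finite ι] {ρ : X → X → ℝ}
    (hρ : ∀ x y, 0 ≤ ρ x y) {f : ι → X → ℝ}
    (hf : ∀ u, ∃ L : ℝ, ∀ x y, |f u x - f u y| ≤ L * ρ x y) :
    ∃ L > 0, ∀ u x y, |f u x - f u y| ≤ L * ρ x y := by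
  choose L hL using hf
  obtain ⟨L₀, hL₀⟩ := Finite.exists_le L
  exact ⟨max L₀ 1, by positivity, fun u x y ↦ (hL u x y).trans <|
    mul_le_mul_of_nonneg_right ((hL₀ u).trans (le_max_left _ _)) (hρ x y)⟩

theorem exists_subset_forall_abs_sub_le {X ι : Type*} [Fintype ι]
    {ρ : X → X → ℝ} (hρ : ∀ x y, 0 ≤ ρ x y) {f : ι → X → ℝ} {L : ℝ} (hL : 0 ≤ L)
    (hf : ∀ u x y, |f u x - f u y| ≤ L * ρ x y) {k : ℕ} {x φ : Fin k → X} {ε δ : ℝ}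
    (hxφ : pPM ρ 1 x φ ≤ ε) (hδ : 0 < δ) {ξ : Fin k × ι → ℝ} {S : Finset (Fin k × ι)}
    (hS : ∀ z ∈ S, f z.2 (x z.1) = ξ z) :
    ∃ S' ⊆ S, (∀ z ∈ S', |ξ z - f z.2 (φ z.1)| ≤ L * δ) ∧
      (#S : ℝ) ≤ #S' + Fintype.card ι * (k * ε / δ) := by
  set B : Finset (Fin k) := {j | δ < ρ (x j) (φ j)}
  refine ⟨{z ∈ S | z.1 ∉ B}, filter_subset _ _, fun z hz ↦ ?_, ?_⟩
  · obtain ⟨hzS, hzB⟩ := mem_filter.1 hz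
    rw [← hS z hzS]
    refine (hf _ _ _).trans (mul_le_mul_of_nonneg_left ?_ hL)
    simpa [B] using hzB
  · have hB : (#B : ℝ) ≤ k * ε / δ := by
      rw [le_div_iff₀ hδ]
      exact card_filter_lt_mul_le hρ hxφ δ
    have hSB : #{z ∈ S | z.1 ∈ B} ≤ #B * Fintype.card ι := by
      rw [← card_univ, ← card_product]
      exact card_le_card fun z hz ↦ mem_product.2 ⟨(mem_filter.1 hz).2, mem_univ _⟩
    have hsplit := card_filter_add_card_filter_not (s := S) (fun z ↦ z.1 ∈ B)
    have : (#S : ℝ) ≤ #{z ∈ S | z.1 ∉ B} + #B * Fintype.card ι := by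
      exact_mod_cast (by omega : #S ≤ #{z ∈ S | z.1 ∉ B} + #B * Fintype.card ι)
    nlinarith [(Fintype.card ι).cast_nonneg (α := ℝ)]

theorem exists_forall_card_lt_of_pPM_one_le {X ι : Type*} [Fintype ι]
    {ρ : X → X → ℝ} (hρ : ∀ x y, 0 ≤ ρ x y) {f : ι → X → ℝ} {L : ℝ} (hL : 0 ≤ L)
    (hf : ∀ u x y, |f u x - f u y| ≤ L * ρ x y) {k : ℕ} {Ξ : Set (Fin k → X)}
    {D : Finset (Fin k → X)} {ε δ : ℝ} (hD : ∀ x ∈ Ξ, ∃ φ ∈ D, pPM ρ 1 x φ ≤ ε) (hδ : 0 < δ)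
    {T : Finset ℝ} (hT : ∀ t ∈ T, ∀ t' ∈ T, t ≠ t' → 2 * (L * δ) < |t - t'|) (a : ℝ)
    (hcount : #D * (k * Fintype.card ι).choose ⌈a⌉₊ * #T ^ (k * Fintype.card ι - ⌈a⌉₊) <
      #T ^ (k * Fintype.card ι)) :
    ∃ ξ : Fin k × ι → ℝ, (∀ z, ξ z ∈ T) ∧ ∀ S : Finset (Fin k × ι), ∀ x ∈ Ξ,
      (∀ z ∈ S, f z.2 (x z.1) = ξ z) → (#S : ℝ) < a + Fintype.card ι * (k * ε / δ) := by
  classical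
  set W := D.image fun φ (z : Fin k × ι) ↦ f z.2 (φ z.1)
  have hR : ∀ b, ∀ t ∈ T, ∀ t' ∈ T, |t - b| ≤ L * δ → |t' - b| ≤ L * δ → t = t' := by
    intro b t ht t' ht' h h'
    by_contra hne
    linarith [hT t ht t' ht' hne, abs_sub_le t b t', abs_sub_comm t' b]
  have hcountW : #W * (Fintype.card (Fin k × ι)).choose ⌈a⌉₊ *
      #T ^ (Fintype.card (Fin k × ι) - ⌈a⌉₊) < #T ^ Fintype.card (Fin k × ι) := by
    rw [Fintype.card_prod, Fintype.card_fin]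
    refine lt_of_le_of_lt ?_ hcount
    gcongr
    exact card_image_le
  obtain ⟨ξ, hξT, hξ⟩ := exists_forall_card_lt_of_forall_rel hR W ⌈a⌉₊ hcountW
  refine ⟨ξ, hξT, fun S x hx hS ↦ ?_⟩
  obtain ⟨φ, hφD, hxφ⟩ := hD x hx
  obtain ⟨S', -, hS', hcard⟩ := exists_subset_forall_abs_sub_le hρ hL hf hxφ hδ hS
  have hS'a : (#S' : ℝ) < a := Nat.lt_ceil.1 (hξ _ (mem_image_of_mem _ hφD) S' hS')
  linarith

theorem tendsto_rpow_nhdsGT_zero {θ : ℝ} (hθ : 0 < θ) :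
    Tendsto (fun ε : ℝ ↦ ε ^ θ) (𝓝[>] 0) (𝓝 0) := by
  simpa [Real.zero_rpow hθ.ne'] using
    (Real.continuousAt_rpow_const 0 θ (Or.inr hθ.le)).tendsto.mono_left nhdsWithin_le_nhds

theorem tendsto_div_rpow_nhdsGT_zero {θ : ℝ} (hθ : θ < 1) :
    Tendsto (fun ε : ℝ ↦ ε / ε ^ θ) (𝓝[>] 0) (𝓝 0) := by
  refine (tendsto_rpow_nhdsGT_zero (sub_pos.2 hθ)).congr' ?_
  filter_upwards [self_mem_nhdsWithin] with ε (hε : 0 < ε)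
  rw [Real.rpow_sub hε, Real.rpow_one]

theorem tendsto_log_inv_nhdsGT_zero : Tendsto (fun ε : ℝ ↦ Real.log ε⁻¹) (𝓝[>] 0) atTop :=
  Real.tendsto_log_atTop.comp tendsto_inv_nhdsGT_zero

theorem lt_exp_of_elog_mul_inv_lt {n : ℕ} {y β : ℝ} (hy : 0 < y)
    (h : elog n * ((y⁻¹ : ℝ) : EReal) < β) : (n : ℝ) < Real.exp (β * y) := by
  rcases n.eq_zero_or_pos with rfl | hn
  · simpa using Real.exp_pos _
  · rw [elog, if_neg hn.ne', ← EReal.coe_mul, EReal.coe_lt_coe_iff, ← div_eq_mul_inv,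
      div_lt_iff₀ hy] at h
    calc (n : ℝ) = Real.exp (Real.log n) := (Real.exp_log (by exact_mod_cast hn)).symm
      _ < Real.exp (β * y) := Real.exp_lt_exp.2 h

theorem Nat.mul_two_pow_lt_pow_of_lt_exp {n K m N : ℕ} {x : ℝ} (hN : 0 < N)
    (hn : (n : ℝ) < Real.exp x) (h : x + K * Real.log 2 ≤ m * Real.log N) :
    n * 2 ^ K < N ^ m := by
  have hN' : (0 : ℝ) < N := by exact_mod_cast hN
  suffices (n * 2 ^ K : ℝ) < N ^ m by exact_mod_cast this
  calc (n * 2 ^ K : ℝ) < Real.exp x * 2 ^ K := by gcongr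
    _ = Real.exp (x + K * Real.log 2) := by
        rw [Real.exp_add, Real.exp_nat_mul, Real.exp_log two_pos]
    _ ≤ Real.exp (m * Real.log N) := Real.exp_le_exp.2 h
    _ = N ^ m := by rw [Real.exp_nat_mul, Real.exp_log hN']

theorem two_mul_lt_inv_ceil_inv {r : ℝ} (hr : 0 < r) (h : 4 * r ≤ 1) :
    2 * r < (⌈(4 * r)⁻¹⌉₊ : ℝ)⁻¹ := by
  have hN : (0 : ℝ) < ⌈(4 * r)⁻¹⌉₊ := by exact_mod_cast Nat.ceil_pos.2 (by positivity)
  rw [lt_inv_comm₀ (by positivity) hN]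
  calc (⌈(4 * r)⁻¹⌉₊ : ℝ) < (4 * r)⁻¹ + 1 := Nat.ceil_lt_add_one (by positivity)
    _ ≤ (2 * r)⁻¹ := by
        have : 1 ≤ (4 * r)⁻¹ := one_le_inv_iff₀.2 ⟨by positivity, h⟩
        rw [show (2 * r)⁻¹ = 2 * (4 * r)⁻¹ by field_simp; norm_num]
        linarith

theorem eventually_add_le_mul_log_ceil (C : ℝ) {L a β θ : ℝ} (hL : 0 < L) (ha : 0 < a)
    (hβ : β < θ * a) :
    ∀ᶠ ε in 𝓝[>] (0 : ℝ), β * Real.log ε⁻¹ + C ≤ a * Real.log ⌈(4 * (L * ε ^ θ))⁻¹⌉₊ := by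
  filter_upwards [tendsto_log_inv_nhdsGT_zero.eventually_ge_atTop
    ((C + a * Real.log (4 * L)) / (θ * a - β)), self_mem_nhdsWithin] with ε hc (hε : 0 < ε)
  rw [div_le_iff₀ (sub_pos.2 hβ)] at hc
  have hN : θ * Real.log ε⁻¹ - Real.log (4 * L) ≤ Real.log ⌈(4 * (L * ε ^ θ))⁻¹⌉₊ :=
    calc θ * Real.log ε⁻¹ - Real.log (4 * L) = Real.log (4 * (L * ε ^ θ))⁻¹ := by
          rw [Real.log_inv, Real.log_inv, ← mul_assoc,
            Real.log_mul (x := 4 * L) (by positivity) (by positivity), Real.log_rpow hε]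
          ring
      _ ≤ _ := Real.log_le_log (by positivity) (Nat.le_ceil _)
  nlinarith

theorem exists_Ioo_forall_card_lt {X ι : Type*} [TopologicalSpace X] [CompactSpace X]
    [Fintype ι] {ρ : X → X → ℝ} (hρ : IsCompatMetric ρ) {f : ι → X → ℝ} {L : ℝ} (hL : 0 < L)
    (hf : ∀ u x y, |f u x - f u y| ≤ L * ρ x y) {ε θ a β : ℝ} (hε : 0 < ε)
    (hr : 4 * (L * ε ^ θ) ≤ 1)
    (hN : β * Real.log ε⁻¹ + Fintype.card ι * Real.log 2 ≤
      a * Real.log ⌈(4 * (L * ε ^ θ))⁻¹⌉₊)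
    {k : ℕ} {Ξ : Set (Fin k → X)}
    (hΞ : (covNum (fun x y ↦ pPM ρ 1 x y) Ξ ε : ℝ) < Real.exp (β * (k * Real.log ε⁻¹))) :
    ∃ ξ : Fin k × ι → ℝ, (∀ z, ξ z ∈ Set.Ioo (0 : ℝ) 1) ∧ ∀ S : Finset (Fin k × ι), ∀ x ∈ Ξ,
      (∀ z ∈ S, f z.2 (x z.1) = ξ z) → (#S : ℝ) < a * k + Fintype.card ι * (k * ε / ε ^ θ) := by
  set N := ⌈(4 * (L * ε ^ θ))⁻¹⌉₊
  have hNpos : 0 < N := Nat.ceil_pos.2 (by positivity)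
  have hlogN : 0 ≤ Real.log N := Real.log_nonneg (by exact_mod_cast hNpos)
  obtain ⟨D, -, hDcard, hD⟩ := exists_card_eq_covNum (hρ.exists_finset_pPM_one_le hε Ξ)
  obtain ⟨T, hTcard, hT01, hTsep⟩ := exists_finset_Ioo_card_eq N
  have hcount : #D * 2 ^ (k * Fintype.card ι) < N ^ ⌈a * k⌉₊ := by
    refine Nat.mul_two_pow_lt_pow_of_lt_exp hNpos (hDcard ▸ hΞ) ?_
    have := Nat.le_ceil (a * k)
    push_cast
    nlinarith [k.cast_nonneg (α := ℝ)]
  obtain ⟨ξ, hξT, hξ⟩ := exists_forall_card_lt_of_pPM_one_le hρ.nonneg hL.le hf hD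
    (Real.rpow_pos_of_pos hε θ) (fun t ht t' ht' htt' ↦ (two_mul_lt_inv_ceil_inv
      (by positivity) hr).trans_le (hTsep t ht t' ht' htt')) (a * k)
    (hTcard ▸ Nat.mul_choose_mul_pow_lt hNpos hcount)
  exact ⟨ξ, fun z ↦ hT01 _ (hξT z), hξ⟩

theorem stmt4_general {X : Type*} [TopologicalSpace X] [CompactSpace X]
    (ρ : X → X → ℝ) (hρ : IsCompatMetric ρ)
    (U : Finset (Set X))
    (f : ↥U → X → ℝ)
    (hfLip : ∀ u : ↥U, ∃ L : ℝ, ∀ x y, |f u x - f u y| ≤ L * ρ x y)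
    (d : ℕ → ℕ) (hdpos : ∀ i, 0 < d i)
    (α η : ℝ) (hα : 0 < α) (hη : 0 < η) :
    ∃ ε₀ > (0 : ℝ), ∀ ε : ℝ, 0 < ε → ε < ε₀ →
      ∀ Ξ : (i : ℕ) → Set (Fin (d i) → X),
        Filter.limsup (fun i =>
            elog (covNum (fun x y => pPM ρ 1 x y) (Ξ i) ε)
              * ((((d i : ℝ) * Real.log ε⁻¹)⁻¹ : ℝ) : EReal)) Filter.atTop ≤ ((α : ℝ) : EReal) →
        ∀ᶠ i in Filter.atTop, ∃ ξ : Fin (d i) × ↥U → ℝ,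
          (∀ z, ξ z ∈ Set.Ioo (0 : ℝ) 1) ∧
          ∀ S : Finset (Fin (d i) × ↥U), (α + η) * d i ≤ S.card →
            ¬ ∃ x ∈ Ξ i, ∀ z ∈ S, f z.2 (x z.1) = ξ z := by
  obtain ⟨L, hL, hf⟩ := exists_pos_forall_abs_sub_le hρ.nonneg hfLip
  set M := Fintype.card ↥U
  set θ := (α + 3 * η / 8) / (α + η / 2)
  have hθ0 : 0 < θ := by positivity
  have hθ1 : θ < 1 := (div_lt_one (by positivity)).2 (by linarith)
  have hθa : α + η / 4 < θ * (α + η / 2) := by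
    rw [div_mul_cancel₀ _ (by positivity)]; linarith
  have hgood : ∀ᶠ ε in 𝓝[>] (0 : ℝ), ε ∈ Set.Ioo 0 1 ∧ M * (ε / ε ^ θ) ≤ η / 4 ∧
      4 * (L * ε ^ θ) ≤ 1 ∧ (α + η / 4) * Real.log ε⁻¹ + M * Real.log 2 ≤
        (α + η / 2) * Real.log ⌈(4 * (L * ε ^ θ))⁻¹⌉₊ := by
    refine Eventually.and (Ioo_mem_nhdsGT one_pos) <| .and ?_ <| .and ?_ <|
      eventually_add_le_mul_log_ceil _ hL (by positivity) hθa
    · exact ((tendsto_div_rpow_nhdsGT_zero hθ1).const_mul (M : ℝ)).eventually_le_const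
        (by rw [mul_zero]; positivity)
    · simpa only [mul_assoc] using
        ((tendsto_rpow_nhdsGT_zero hθ0).const_mul (4 * L)).eventually_le_const
          (by rw [mul_zero]; exact one_pos)
  obtain ⟨ε₀, hε₀, hε₀good⟩ := mem_nhdsGT_iff_exists_Ioo_subset.1 hgood
  refine ⟨ε₀, hε₀, fun ε hε hεε₀ Ξ hΞ ↦ ?_⟩
  obtain ⟨⟨-, hε1⟩, hBad, hr, hN⟩ := hε₀good ⟨hε, hεε₀⟩
  have hc : 0 < Real.log ε⁻¹ := Real.log_pos ((one_lt_inv₀ hε).2 hε1)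
  have hΞ' := hΞ.trans_lt (EReal.coe_lt_coe_iff.2 (by linarith : α < α + η / 4))
  filter_upwards [eventually_lt_of_limsup_lt hΞ'] with i hi
  have hk : (0 : ℝ) < d i := by exact_mod_cast hdpos i
  obtain ⟨ξ, hξ01, hξ⟩ := exists_Ioo_forall_card_lt hρ hL hf hε hr hN
    (lt_exp_of_elog_mul_inv_lt (by positivity) hi)
  refine ⟨ξ, hξ01, fun S hS ⟨x, hx, hxS⟩ ↦ ?_⟩
  have hSk := hξ S x hx hxS
  rw [mul_div_assoc, mul_left_comm] at hSk
  nlinarith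

/-- given a finite open cover `𝒰` of a compact metrizable space `X` with a
subordinate family of Lipschitz functions `(f_U)` whose pointwise max is `1`, and a sequence
`d_i → ∞`, for every `α, η > 0` there is `ε₀ > 0` such that: whenever `0 < ε < ε₀` and sets
`Ξ_i ⊆ X^{d_i}` have `limsup_i log S_ε(Ξ_i,ρ_1)/(d_i log(1/ε)) ≤ α`, then for all large `i`
some `ξ ∈ (0,1)^{{1,…,d_i}×𝒰}` avoids `Ψ_i(Ξ_i)|_S` for every `S` with `|S| ≥ (α+η)d_i`,
where `Ψ_i(x)(j,U) = f_U(x(j))`. -/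
theorem stmt4 {X : Type*} [TopologicalSpace X] [CompactSpace X]
    [TopologicalSpace.MetrizableSpace X]
    (ρ : X → X → ℝ) (hρ : IsCompatMetric ρ)
    (U : Finset (Set X)) (hUopen : ∀ u ∈ U, IsOpen u) (hUcover : ∀ x : X, ∃ u ∈ U, x ∈ u)
    (f : ↥U → X → ℝ)
    (hf01 : ∀ u x, f u x ∈ Set.Icc (0 : ℝ) 1)
    (hfLip : ∀ u : ↥U, ∃ L : ℝ, ∀ x y, |f u x - f u y| ≤ L * ρ x y)
    (hfmax : ∀ x : X, ∃ u : ↥U, f u x = 1)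
    (hfzero : ∀ (u : ↥U) (x : X), x ∉ (u : Set X) → f u x = 0)
    (d : ℕ → ℕ) (hdpos : ∀ i, 0 < d i) (hd : Filter.Tendsto d Filter.atTop Filter.atTop)
    (α η : ℝ) (hα : 0 < α) (hη : 0 < η) :
    ∃ ε₀ > (0 : ℝ), ∀ ε : ℝ, 0 < ε → ε < ε₀ →
      ∀ Ξ : (i : ℕ) → Set (Fin (d i) → X),
        Filter.limsup (fun i =>
            elog (covNum (fun x y => pPM ρ 1 x y) (Ξ i) ε)
              * ((((d i : ℝ) * Real.log ε⁻¹)⁻¹ : ℝ) : EReal)) Filter.atTop ≤ ((α : ℝ) : EReal) →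
        ∀ᶠ i in Filter.atTop, ∃ ξ : Fin (d i) × ↥U → ℝ,
          (∀ z, ξ z ∈ Set.Ioo (0 : ℝ) 1) ∧
          ∀ S : Finset (Fin (d i) × ↥U), (α + η) * d i ≤ S.card →
            ¬ ∃ x ∈ Ξ i, ∀ z ∈ S, f z.2 (x z.1) = ξ z :=
  stmt4_general ρ hρ U f hfLip d hdpos α η hα hη
end

section
/- Let A be a discrete abelian group, B ⊆ A a subgroup, and ρ a continuous pseudometric on the Pontryagin dual Â of A. Let S ⊆ B be a subset such that every element of B is a finite sum of elements of S. Then for every ε > 0 there exist a finite subset E ⊆ S and δ > 0 such that whenever χ ∈ Â satisfies |χ(b)| < δ for all b ∈ E, there exists χ̃ ∈ Â with χ̃(b) = 0 for all b ∈ B and ρ(χ̃, χ) < ε. -/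
/-- The Pontryagin dual of a discrete abelian group `A`: all homomorphisms `A → ℝ/ℤ` with the
topology of pointwise convergence. -/
abbrev PDual (A : Type*) [AddCommGroup A] : Type _ :=
  {χ : A → AddCircle (1 : ℝ) // ∀ x y : A, χ (x + y) = χ x + χ y}

/-! The dual is compact, and the characters that are `1/(n+1)`-small on a finite part of `S`
form a directed family of closed sets whose intersection consists of the characters killing `S`,
hence `B`. The `ε`-neighbourhood of the annihilator of `B` is a neighbourhood of that
intersection, so by compactness it already contains one member of the family. -/

open Filter Topology

theorem exists_finset_subset_forall_norm_lt_imp_mem {X ι E : Type*} [TopologicalSpace X]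
    [CompactSpace X] [NormedAddGroup E] {f : ι → X → E} (hf : ∀ i, Continuous (f i))
    (s : Set ι) {U : Set X} (hU : ∀ x, (∀ i ∈ s, f i x = 0) → U ∈ 𝓝 x) :
    ∃ (t : Finset ι) (δ : ℝ), ↑t ⊆ s ∧ 0 < δ ∧ ∀ x, (∀ i ∈ t, ‖f i x‖ < δ) → x ∈ U := by
  classical
  set V : Finset s × ℕ → Set X :=
    fun p => ⋂ i ∈ p.1, {x | ‖f i x‖ ≤ 1 / ((p.2 : ℝ) + 1)}
  have hV_anti : Antitone V := by
    rintro ⟨t, m⟩ ⟨t', n⟩ ⟨htt' : t ⊆ t', hmn : m ≤ n⟩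
    exact Set.biInter_mono htt' fun i _ x (hx : ‖f i x‖ ≤ _) => hx.trans (by gcongr)
  have hV_closed (p) : IsClosed (V p) :=
    isClosed_biInter fun i _ => isClosed_le (hf i).norm continuous_const
  have hV_inter : ∀ x ∈ ⋂ p, V p, ∀ i ∈ s, f i x = 0 := by
    intro x hx i hi
    have hle (n : ℕ) : ‖f i x‖ ≤ 1 / ((n : ℝ) + 1) :=
      Set.mem_iInter₂.mp (Set.mem_iInter.mp hx ({⟨i, hi⟩}, n)) ⟨i, hi⟩
        (Finset.mem_singleton_self _)
    exact norm_le_zero_iff.mp (ge_of_tendsto' tendsto_one_div_add_atTop_nhds_zero_nat hle)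
  obtain ⟨⟨t, n⟩, htU⟩ := exists_subset_nhds_of_isCompact' hV_anti.directed_ge
    (fun p => (hV_closed p).isCompact) hV_closed fun x hx => hU x (hV_inter x hx)
  refine ⟨t.map (.subtype _), 1 / ((n : ℝ) + 1), ?_, by positivity, fun x hx => htU ?_⟩
  · simp
  · exact Set.mem_iInter₂.mpr fun i hi => (hx i (Finset.mem_map_of_mem _ hi)).le

theorem IsContPseudoMetric.setOf_exists_lt_mem_nhds {X : Type*} [TopologicalSpace X]
    {ρ : X → X → ℝ} (hρ : IsContPseudoMetric ρ) {ε : ℝ} (hε : 0 < ε) {K : Set X} {x : X}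
    (hx : x ∈ K) : {y | ∃ x ∈ K, ρ x y < ε} ∈ 𝓝 x := by
  have hball : {y | ρ x y < ε} ∈ 𝓝 x :=
    (isOpen_lt (hρ.continuous.comp (.prodMk_right x)) continuous_const).mem_nhds
      (show ρ x x < ε by rwa [hρ.refl])
  exact mem_of_superset hball fun y hy => ⟨x, hx, hy⟩

namespace PDual

variable {A : Type*} [AddCommGroup A]

def toAddMonoidHom (χ : PDual A) : A →+ AddCircle (1 : ℝ) := AddMonoidHom.mk' χ.1 χ.2

theorem continuous_apply (a : A) : Continuous fun χ : PDual A => χ.1 a :=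
  (_root_.continuous_apply a).comp continuous_subtype_val

instance : CompactSpace (PDual A) :=
  isCompact_iff_compactSpace.mp (isClosed_setOfPred_map_add A (AddCircle (1 : ℝ))).isCompact

theorem apply_eq_zero_of_mem_closure {χ : PDual A} {S : Set A} (hS : ∀ s ∈ S, χ.1 s = 0)
    {b : A} (hb : b ∈ AddSubmonoid.closure S) : χ.1 b = 0 :=
  AddMonoidHom.eqOn_closureM (f := χ.toAddMonoidHom) (g := 0) hS hb

end PDual

theorem stmt9_general {A : Type*} [AddCommGroup A]
    (B : AddSubgroup A) (ρ : PDual A → PDual A → ℝ) (hρ : IsContPseudoMetric ρ)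
    (S : Set A)
    (hgen : ∀ b ∈ B, ∃ l : List A, (∀ x ∈ l, x ∈ S) ∧ l.sum = b)
    (ε : ℝ) (hε : 0 < ε) :
    ∃ (E : Finset A) (δ : ℝ), ↑E ⊆ S ∧ 0 < δ ∧
      ∀ χ : PDual A, (∀ b ∈ E, ‖χ.1 b‖ < δ) →
        ∃ χ' : PDual A, (∀ b ∈ B, χ'.1 b = 0) ∧ ρ χ' χ < ε := by
  have hB : ∀ b ∈ B, b ∈ AddSubmonoid.closure S := fun b hb => by
    obtain ⟨l, hlS, rfl⟩ := hgen b hb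
    exact list_sum_mem fun x hx => AddSubmonoid.subset_closure (hlS x hx)
  exact exists_finset_subset_forall_norm_lt_imp_mem PDual.continuous_apply S fun χ hχ =>
    hρ.setOf_exists_lt_mem_nhds hε fun b hb => PDual.apply_eq_zero_of_mem_closure hχ (hB b hb)

/-- if every element of the subgroup `B ≤ A` is a finite sum of elements of
`S ⊆ B`, then for every `ε > 0` there are a finite `E ⊆ S` and `δ > 0` such that any character
`χ` of `A` which is `δ`-small on `E` is `ε`-close (in a given continuous pseudometric `ρ` on
the dual) to a character annihilating `B`. -/
theorem stmt9 {A : Type*} [AddCommGroup A]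
    (B : AddSubgroup A) (ρ : PDual A → PDual A → ℝ) (hρ : IsContPseudoMetric ρ)
    (S : Set A) (hSB : S ⊆ (B : Set A))
    (hgen : ∀ b ∈ B, ∃ l : List A, (∀ x ∈ l, x ∈ S) ∧ l.sum = b)
    (ε : ℝ) (hε : 0 < ε) :
    ∃ (E : Finset A) (δ : ℝ), ↑E ⊆ S ∧ 0 < δ ∧
      ∀ χ : PDual A, (∀ b ∈ E, ‖χ.1 b‖ < δ) →
        ∃ χ' : PDual A, (∀ b ∈ B, χ'.1 b = 0) ∧ ρ χ' χ < ε :=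
  stmt9_general B ρ hρ S hgen ε hε
end

section
/- Let X be a compact metrizable topological space and Y ⊆ X a closed subspace. Let ρ be a metric on Y that induces the subspace topology of Y. Then there exists a metric d on X inducing the topology of X such that d(y,y') = ρ(y,y') for all y, y' ∈ Y. -/
/-- A continuous metric on a compact Hausdorff space induces the topology. -/
theorem isCompatMetric_of_continuous {X : Type*} [TopologicalSpace X] [CompactSpace X]
    [T2Space X] (d : X → X → ℝ)
    (hcont : Continuous fun p : X × X => d p.1 p.2)
    (hrefl : ∀ x, d x x = 0)
    (heq : ∀ x y, d x y = 0 → x = y)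
    (hsymm : ∀ x y, d x y = d y x)
    (htri : ∀ x y z, d x z ≤ d x y + d y z) :
    IsCompatMetric d := by
  have hnonneg : ∀ x y, 0 ≤ d x y := by
    intro x y
    have := htri x y x
    rw [hrefl, hsymm y x] at this
    linarith
  refine ⟨hrefl, heq, hsymm, htri, fun s => ?_⟩
  constructor
  · intro hs x hx
    rcases Set.eq_empty_or_nonempty sᶜ with hsc | hsc
    · exact ⟨1, one_pos, fun y _ => by
        by_contra hy
        exact (Set.eq_empty_iff_forall_notMem.mp hsc y) hy⟩
    · have hcpt : IsCompact sᶜ := (isClosed_compl_iff.mpr hs).isCompact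
      have hcf : Continuous fun y => d x y :=
        hcont.comp (continuous_const.prodMk continuous_id)
      obtain ⟨y₀, hy₀, hmin⟩ := hcpt.exists_isMinOn hsc hcf.continuousOn
      refine ⟨d x y₀, ?_, ?_⟩
      · rcases lt_or_eq_of_le (hnonneg x y₀) with h | h
        · exact h
        · exact absurd (heq x y₀ h.symm) (fun hxy => hy₀ (hxy ▸ hx))
      · intro y hy
        by_contra hys
        exact absurd (hmin hys) (by simpa using hy)
  · intro h
    rw [isOpen_iff_mem_nhds]
    intro x hx
    obtain ⟨ε, hε, hb⟩ := h x hx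
    have hball : IsOpen {y | d x y < ε} :=
      isOpen_lt (hcont.comp (continuous_const.prodMk continuous_id)) continuous_const
    exact Filter.mem_of_superset (hball.mem_nhds (by simp [hrefl x, hε])) hb


/-- a compatible metric on a closed subspace `Y` of a compact metrizable space
`X` extends to a compatible metric on all of `X`. -/
theorem stmt10 {X : Type*} [TopologicalSpace X] [CompactSpace X]
    [TopologicalSpace.MetrizableSpace X]
    (Y : Set X) (hY : IsClosed Y) (ρ : Y → Y → ℝ) (hρ : IsCompatMetric ρ) :
    ∃ d : X → X → ℝ, IsCompatMetric d ∧ ∀ y y' : Y, d y y' = ρ y y' := by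
  letI : MetricSpace X := TopologicalSpace.metrizableSpaceMetric X
  rcases isEmpty_or_nonempty Y with hE | hNE
  · refine ⟨fun x x' => dist x x', isCompatMetric_of_continuous _ continuous_dist
      dist_self (fun x y => eq_of_dist_eq_zero) dist_comm dist_triangle, fun y => isEmptyElim y⟩
  -- basic facts about ρ
  have hρnonneg : ∀ a b : Y, 0 ≤ ρ a b := by
    intro a b
    have := hρ.triangle a b a
    rw [hρ.refl, hρ.symm b a] at this
    linarith
  have hball_open : ∀ (a : Y) (δ : ℝ), IsOpen {y : Y | ρ a y < δ} := by
    intro a δ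
    rw [hρ.isOpen_iff]
    intro x hx
    refine ⟨δ - ρ a x, by simpa using hx, fun y hy => ?_⟩
    have := hρ.triangle a x y
    simp only [Set.mem_setOf_eq] at *
    linarith
  have hρcont : Continuous fun p : Y × Y => ρ p.1 p.2 := by
    rw [continuous_iff_continuousAt]
    rintro ⟨a, b⟩
    rw [ContinuousAt, Metric.tendsto_nhds]
    intro ε hε
    have hU : {y : Y | ρ a y < ε / 2} ×ˢ {y : Y | ρ b y < ε / 2} ∈ nhds (a, b) := by
      refine prod_mem_nhds ((hball_open a _).mem_nhds ?_) ((hball_open b _).mem_nhds ?_)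
      · simp [hρ.refl, hε]
      · simp [hρ.refl, hε]
    filter_upwards [hU] with p hp
    obtain ⟨h1, h2⟩ := hp
    simp only [Set.mem_setOf_eq] at h1 h2
    rw [Real.dist_eq, abs_sub_lt_iff]
    have ta := hρ.triangle p.1 a p.2
    have tb := hρ.triangle a b p.2
    have tc := hρ.triangle a p.1 b
    have td := hρ.triangle p.1 p.2 b
    have s1 := hρ.symm a p.1
    have s2 := hρ.symm b p.2
    constructor <;> linarith
  -- Tietze extension of ρ to X × X
  have hYY : IsClosed (Y ×ˢ Y) := hY.prod hY
  have hsub : Continuous fun p : ↥(Y ×ˢ Y) =>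
      ((⟨(p : X × X).1, p.2.1⟩ : Y), (⟨(p : X × X).2, p.2.2⟩ : Y)) := by
    refine Continuous.prodMk ?_ ?_ <;>
      exact Continuous.subtype_mk (by fun_prop) _
  obtain ⟨F, hF⟩ := ContinuousMap.exists_restrict_eq (Y := ℝ) hYY
    ⟨_, hρcont.comp hsub⟩
  have hFval : ∀ y y' : Y, F ((y : X), (y' : X)) = ρ y y' := by
    intro y y'
    have := DFunLike.congr_fun hF (⟨((y : X), (y' : X)), ⟨y.2, y'.2⟩⟩ : ↥(Y ×ˢ Y))
    simpa using this
  -- curry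
  haveI : CompactSpace Y := isCompact_iff_compactSpace.mp hY.isCompact
  set G : C(X × Y, ℝ) := F.comp ⟨fun p => (p.1, (p.2 : X)), by fun_prop⟩ with hG
  set φ : C(X, C(Y, ℝ)) := G.curry with hφ
  have hφval : ∀ (x : X) (z : Y), φ x z = F (x, (z : X)) := fun x z => rfl
  have key : ∀ y y' : Y, dist (φ y) (φ y') = ρ y y' := by
    intro y y'
    apply le_antisymm
    · rw [ContinuousMap.dist_le (hρnonneg y y')]
      intro z
      rw [hφval, hφval, hFval, hFval, Real.dist_eq, abs_sub_le_iff]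
      have t1 := hρ.triangle y y' z
      have t2 := hρ.triangle y' y z
      have s := hρ.symm y y'
      constructor <;> linarith
    · have h := ContinuousMap.dist_apply_le_dist (f := φ y) (g := φ y') y'
      rw [hφval, hφval, hFval, hFval, hρ.refl, Real.dist_eq, sub_zero,
        abs_of_nonneg (hρnonneg y y')] at h
      exact h
  -- the distance
  have hYne : Y.Nonempty := Set.nonempty_coe_sort.mp hNE
  set u : X → ℝ := fun x => Metric.infDist x Y with hu
  have hun : ∀ x, 0 ≤ u x := fun x => Metric.infDist_nonneg
  have huY : ∀ y ∈ Y, u y = 0 := fun y hy => Metric.infDist_zero_of_mem hy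
  have huY' : ∀ x, u x = 0 → x ∈ Y := by
    intro x hx
    have : x ∈ closure Y := (Metric.mem_closure_iff_infDist_zero hYne).mpr hx
    rwa [hY.closure_eq] at this
  have hulip : ∀ x y : X, u x ≤ u y + dist x y := fun x y =>
    Metric.infDist_le_infDist_add_dist
  set e : X → X → ℝ := fun x x' => min (dist x x') (u x + u x') with he
  have hen : ∀ x x', 0 ≤ e x x' := fun x x' =>
    le_min dist_nonneg (add_nonneg (hun x) (hun x'))
  have hetri : ∀ x y z, e x z ≤ e x y + e y z := by
    intro x y z
    rcases le_total (dist x y) (u x + u y) with h1 | h1 <;>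
      rcases le_total (dist y z) (u y + u z) with h2 | h2
    · rw [he]
      simp only [min_eq_left h1, min_eq_left h2]
      exact le_trans (min_le_left _ _) (dist_triangle x y z)
    · simp only [he, min_eq_left h1, min_eq_right h2]
      refine le_trans (min_le_right _ _) ?_
      have := hulip x y
      linarith
    · simp only [he, min_eq_right h1, min_eq_left h2]
      refine le_trans (min_le_right _ _) ?_
      have := hulip z y
      rw [dist_comm z y] at this
      linarith
    · simp only [he, min_eq_right h1, min_eq_right h2]
      refine le_trans (min_le_right _ _) ?_
      have := hun y
      linarith
  have hecont : Continuous fun p : X × X => e p.1 p.2 := by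
    apply Continuous.min
    · exact continuous_dist
    · exact ((Metric.continuous_infDist_pt Y).comp continuous_fst).add
        ((Metric.continuous_infDist_pt Y).comp continuous_snd)
  set d : X → X → ℝ := fun x x' => e x x' + dist (φ x) (φ x') with hd
  have hdcont : Continuous fun p : X × X => d p.1 p.2 := by
    apply hecont.add
    exact Continuous.dist (φ.continuous.comp continuous_fst) (φ.continuous.comp continuous_snd)
  refine ⟨d, isCompatMetric_of_continuous d hdcont ?_ ?_ ?_ ?_, ?_⟩
  · intro x
    simp only [hd, dist_self, add_zero, he, dist_self]
    exact min_eq_left (by nlinarith [hun x])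
  · intro x x' h
    simp only [hd] at h
    have he0 := hen x x'
    have hd0 : (0:ℝ) ≤ dist (φ x) (φ x') := dist_nonneg
    have h1 : e x x' = 0 := by linarith
    have h2 : dist (φ x) (φ x') = 0 := by linarith
    simp only [he] at h1
    rcases le_total (dist x x') (u x + u x') with hc | hc
    · rw [min_eq_left hc] at h1
      exact eq_of_dist_eq_zero h1
    · rw [min_eq_right hc] at h1
      have hx : x ∈ Y := huY' x (by have := hun x; have := hun x'; linarith)
      have hx' : x' ∈ Y := huY' x' (by have := hun x; have := hun x'; linarith)
      have hk := key ⟨x, hx⟩ ⟨x', hx'⟩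
      rw [h2] at hk
      have := hρ.eq_of_eq_zero _ _ hk.symm
      exact congrArg Subtype.val this
  · intro x y
    simp only [hd, he]
    rw [dist_comm x y, dist_comm (φ x) (φ y), add_comm (u x) (u y)]
  · intro x y z
    have := hetri x y z
    have := dist_triangle (φ x) (φ y) (φ z)
    simp only [hd]
    linarith
  · intro y y'
    simp only [hd, he]
    rw [key y y', huY _ y.2, huY _ y'.2]
    have : min (dist (y : X) (y' : X)) (0 + 0) = 0 := by
      simp [min_eq_right dist_nonneg]
    rw [this, zero_add]
end
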